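/- arXiv:2211.03133 — 6 statements merged into one kernel-verified Lean document; each statement's English description precedes it below -/
import Mathlib

section
/- For all integers n and s with n ≥ s ≥ 2, the minimum number of edges in a K_s-saturated graph on n vertices equals (s−2)(n−s+2) + C(s−2, 2). -/
/-- `sGraph n k` is the join `S_{n,k}` of the complete graph `K_k` with the empty graph on
`n - k` vertices: the first `k` vertices of `Fin n` form a clique joined to the rest. -/
def sGraph (n k : ℕ) : SimpleGraph (Fin n) where
  Adj i j := i ≠ j ∧ ((i : ℕ) < k ∨ (j : ℕ) < k)
  symm := ⟨fun i j h => ⟨h.1.symm, h.2.symm⟩⟩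
  loopless := ⟨fun i h => h.1 rfl⟩

/-- `G` is `K_s`-saturated: `G` has no `K_s` subgraph, but adding any edge between two
distinct nonadjacent vertices creates one. -/
def IsKSat {V : Type*} (G : SimpleGraph V) (s : ℕ) : Prop :=
  G.CliqueFree s ∧
    ∀ u v : V, u ≠ v → ¬ G.Adj u v →
      ¬ (G ⊔ SimpleGraph.fromEdgeSet {s(u, v)}).CliqueFree s

/-- `numMatchings G k` is the number of copies of `M_k` in `G`, i.e. the number of
`k`-element sets of pairwise disjoint edges of `G`. -/
noncomputable def numMatchings {V : Type*} (G : SimpleGraph V) (k : ℕ) : ℕ :=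
  Set.ncard {M : Finset (Sym2 V) | M.card = k ∧ (∀ e ∈ M, e ∈ G.edgeSet) ∧
    ∀ e ∈ M, ∀ f ∈ M, e ≠ f → ∀ v, v ∈ e → v ∉ f}

/-- `satM n k s` is the minimum number of copies of `M_k` over all `K_s`-saturated graphs
on `n` vertices. -/
noncomputable def satM (n k s : ℕ) : ℕ :=
  sInf {m | ∃ G : SimpleGraph (Fin n), IsKSat G s ∧ numMatchings G k = m}

/-- `numIndepSets G ℓ` is the number of independent sets of size `ℓ` in `G`. -/
noncomputable def numIndepSets {V : Type*} (G : SimpleGraph V) (ℓ : ℕ) : ℕ :=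
  Set.ncard {t : Finset V | t.card = ℓ ∧ ∀ v ∈ t, ∀ w ∈ t, ¬ G.Adj v w}

/-- `numCliques G r` is the number of copies of `K_r` in `G`, i.e. the number of
`r`-element vertex subsets inducing a complete graph. -/
noncomputable def numCliques {V : Type*} (G : SimpleGraph V) (r : ℕ) : ℕ :=
  Set.ncard {t : Finset V | t.card = r ∧ G.IsClique (t : Set V)}

/-!
The extremal graph is `sGraph n (s - 2)`. The lower bound is Kalai's rigidity argument. Put the
vertices on the moment curve in `ℝ^d`, `d = s - 2`, and attach to every pair of vertices its row
of the rigidity matrix. Any `d + 2` points of the moment curve satisfy an affine dependence with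
no zero coefficient; this gives a self-stress of `K_{d+2}`, so the row of each edge of `K_{d+2}`
lies in the span of the rows of its other edges. In a `K_{d+2}`-saturated graph `G` every
missing edge closes such a clique, so the rows of the edges of `G` span the rows of all pairs,
and `|E(G)|` is at least the size of any linearly independent family of rows. The rows of the
edges of `sGraph n d` are independent: every vertex has at most `d` smaller neighbours, and any
`d + 1` points of the moment curve are affinely independent.
-/

open Finset Module

theorem ncard_le_ncard_of_linearIndepOn {K ι M : Type*} [Field K] [AddCommGroup M] [Module K M]
    [Finite ι] {v : ι → M} {s t : Set ι} (hs : LinearIndepOn K v s)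
    (hst : v '' s ⊆ Submodule.span K (v '' t)) : s.ncard ≤ t.ncard := by
  classical
  have := Fintype.ofFinite ι
  have : FiniteDimensional K (Submodule.span K (v '' t)) :=
    FiniteDimensional.span_of_finite K (Set.toFinite _)
  calc s.ncard = (v '' s).ncard := hs.injOn.ncard_image.symm
    _ = finrank K (Submodule.span K (v '' s)) := by
      rw [finrank_span_set_eq_card hs.id_image, Set.ncard_eq_toFinset_card']
    _ ≤ finrank K (Submodule.span K (v '' t)) := Submodule.finrank_mono (Submodule.span_le.2 hst)
    _ ≤ (v '' t).ncard := by
      rw [Set.ncard_eq_toFinset_card']; exact finrank_span_le_card _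
    _ ≤ t.ncard := Set.ncard_image_le (Set.toFinite _)

section Rigidity

variable {K V E : Type*} [Field K] [AddCommGroup E] [Module K E]

def rigidityRow [DecidableEq V] (p : V → E) : Sym2 V → V → E :=
  Sym2.lift ⟨fun a b => Pi.single a (p a - p b) + Pi.single b (p b - p a), fun _ _ => add_comm _ _⟩

variable {p : V → E}

theorem rigidityRow_mk [DecidableEq V] (a b : V) :
    rigidityRow p s(a, b) = Pi.single a (p a - p b) + Pi.single b (p b - p a) := rfl

@[simp] theorem rigidityRow_diag [DecidableEq V] (a : V) : rigidityRow p s(a, a) = 0 := by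
  simp [rigidityRow_mk]

theorem sum_mul_smul_sub_eq_zero {S : Finset V} {c : V → K} (hc₀ : ∑ b ∈ S, c b = 0)
    (hc₁ : ∑ b ∈ S, c b • p b = 0) (a : V) : ∑ b ∈ S, (c a * c b) • (p a - p b) = 0 := by
  simp only [mul_smul, smul_sub, ← smul_sum, sum_sub_distrib, ← sum_smul, hc₀, hc₁, zero_smul,
    sub_zero, smul_zero]

/-- The weights `c a * c b` form a self-stress of the complete graph on `S`. -/
theorem sum_sum_mul_smul_rigidityRow_eq_zero [DecidableEq V] {S : Finset V} {c : V → K}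
    (hc₀ : ∑ b ∈ S, c b = 0) (hc₁ : ∑ b ∈ S, c b • p b = 0) :
    ∑ a ∈ S, ∑ b ∈ S, (c a * c b) • rigidityRow p s(a, b) = 0 := by
  have half : ∀ a, ∑ b ∈ S, (c a * c b) • (Pi.single a (p a - p b) : V → E) = 0 := fun a => by
    ext x
    rcases eq_or_ne x a with rfl | hx
    · simpa using sum_mul_smul_sub_eq_zero hc₀ hc₁ x
    · simp [hx]
  simp_rw [rigidityRow_mk, smul_add, sum_add_distrib]
  rw [sum_comm (f := fun a b => (c a * c b) • Pi.single b (p b - p a))]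
  simp only [mul_comm (c _) (c _), half, sum_const_zero, add_zero]

theorem rigidityRow_mem_of_sum_eq_zero [DecidableEq V] [CharZero K] {U : Submodule K (V → E)}
    {S : Finset V} {c : V → K} (hc₀ : ∑ b ∈ S, c b = 0) (hc₁ : ∑ b ∈ S, c b • p b = 0)
    {u v : V} (hu : u ∈ S) (hv : v ∈ S) (huv : u ≠ v) (hcu : c u ≠ 0) (hcv : c v ≠ 0)
    (hU : ∀ a ∈ S, ∀ b ∈ S, a ≠ b → s(a, b) ≠ s(u, v) → rigidityRow p s(a, b) ∈ U) :
    rigidityRow p s(u, v) ∈ U := by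
  set f : V × V → V → E := fun x => (c x.1 * c x.2) • rigidityRow p s(x.1, x.2)
  have hsum : ∑ x ∈ S ×ˢ S, f x = 0 := by
    rw [sum_product]; exact sum_sum_mul_smul_rigidityRow_eq_zero hc₀ hc₁
  have hvu : (v, u) ∈ (S ×ˢ S).erase (u, v) := by simp [hu, hv, huv.symm]
  rw [← add_sum_erase _ _ (mem_product.2 ⟨hu, hv⟩ : (u, v) ∈ S ×ˢ S), ← add_sum_erase _ _ hvu,
    ← add_assoc] at hsum
  have hrest : ∑ x ∈ ((S ×ˢ S).erase (u, v)).erase (v, u), f x ∈ U := by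
    refine U.sum_mem fun ⟨a, b⟩ hx => ?_
    simp only [mem_erase, mem_product, ne_eq, Prod.mk.injEq] at hx
    obtain ⟨hne_vu, hne_uv, ha, hb⟩ := hx
    rcases eq_or_ne a b with rfl | hab
    · simp [f]
    · refine U.smul_mem _ (hU a ha b hb hab ?_)
      rw [ne_eq, Sym2.eq_iff]
      tauto
  have hpair : f (u, v) + f (v, u) = (2 * (c u * c v)) • rigidityRow p s(u, v) := by
    simp only [f, Sym2.eq_swap (a := v), mul_comm (c v), two_mul, add_smul]
  rw [hpair] at hsum
  have := (U.add_mem_iff_left hrest).1 (hsum ▸ U.zero_mem)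
  exact (U.smul_mem_iff (mul_ne_zero two_ne_zero (mul_ne_zero hcu hcv))).1 this

theorem rigidityRow_mem_span_of_isKSat [DecidableEq V] [CharZero K] {G : SimpleGraph V} {s : ℕ}
    (hG : IsKSat G s)
    (hp : ∀ S : Finset V, S.card = s →
      ∃ c : V → K, ∑ a ∈ S, c a = 0 ∧ ∑ a ∈ S, c a • p a = 0 ∧ ∀ a ∈ S, c a ≠ 0)
    (e : Sym2 V) : rigidityRow p e ∈ Submodule.span K (rigidityRow p '' G.edgeSet) := by
  induction e with | _ u v
  rcases eq_or_ne u v with rfl | huv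
  · simp
  by_cases hadj : G.Adj u v
  · exact Submodule.subset_span ⟨_, hadj, rfl⟩
  obtain ⟨S, hS⟩ : ∃ S, (G ⊔ SimpleGraph.edge u v).IsNClique s S := by
    simpa [SimpleGraph.CliqueFree, SimpleGraph.edge] using hG.2 u v huv hadj
  have hu := hG.1.mem_of_sup_edge_isNClique hS
  have hv := hG.1.mem_of_sup_edge_isNClique (SimpleGraph.edge_comm u v ▸ hS)
  obtain ⟨c, hc₀, hc₁, hc⟩ := hp S hS.card_eq
  refine rigidityRow_mem_of_sum_eq_zero hc₀ hc₁ hu hv huv (hc u hu) (hc v hv)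
    fun a ha b hb hab hne => Submodule.subset_span ⟨s(a, b), ?_, rfl⟩
  have hadj := hS.isClique ha hb hab
  simp only [SimpleGraph.sup_adj, SimpleGraph.edge_adj] at hadj
  rcases hadj with h | ⟨h | h, -⟩
  · exact h
  · exact absurd (by rw [h.1, h.2]) hne
  · exact absurd (by rw [h.1, h.2, Sym2.eq_swap]) hne

section Order
variable [LinearOrder V]

theorem rigidityRow_apply_of_sup_le {e : Sym2 V} {b : V} (h : e.sup ≤ b) :
    rigidityRow p e b = if e.sup = b then p b - p e.inf else 0 := by
  induction e with | _ x y
  simp only [Sym2.sup_mk, sup_le_iff] at h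
  rcases h.1.eq_or_lt with rfl | hx <;> rcases h.2.eq_or_lt with rfl | hy
  · simp
  · simp [rigidityRow_mk, hy.ne, hy.le]
  · simp [rigidityRow_mk, hx.ne, hx.le]
  · simp [rigidityRow_mk, hx.ne', hy.ne', (max_lt hx hy).ne]

theorem linearIndepOn_sub_inf_of_sup_eq {H : SimpleGraph V} {b : V}
    (hb : LinearIndepOn K (fun a => p b - p a) {a | a < b ∧ H.Adj a b}) :
    LinearIndepOn K (fun e : Sym2 V => p b - p e.inf) {e ∈ H.edgeSet | e.sup = b} := by
  refine (hb.mono ?_).comp_of_image ?_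
  · rintro _ ⟨e, ⟨he, rfl⟩, rfl⟩
    induction e with | _ x y
    have hxy := H.ne_of_adj he
    rcases le_total x y with h | h <;> simp_all [hxy.lt_of_le, hxy.symm.lt_of_le, he.symm]
  · rintro e ⟨-, he⟩ f ⟨-, hf⟩ hef
    exact Sym2.inf_eq_inf_and_sup_eq_sup.1 ⟨hef, he.trans hf.symm⟩

theorem linearIndepOn_rigidityRow {H : SimpleGraph V}
    (hp : ∀ b, LinearIndepOn K (fun a => p b - p a) {a | a < b ∧ H.Adj a b}) :
    LinearIndepOn K (rigidityRow p) H.edgeSet := by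
  classical
  rw [linearIndepOn_iff']
  intro t g ht hsum
  by_contra! ⟨e₀, he₀, hg₀⟩
  set t' := t.filter (g · ≠ 0)
  obtain ⟨e₁, he₁, hmax⟩ := t'.exists_max_image Sym2.sup ⟨e₀, mem_filter.2 ⟨he₀, hg₀⟩⟩
  set b := e₁.sup
  -- In the block of `b`, only the edges whose top vertex is `b` contribute.
  have hcoord : ∑ e ∈ t' with e.sup = b, g e • (p b - p e.inf) = 0 := by
    calc ∑ e ∈ t' with e.sup = b, g e • (p b - p e.inf)
        = ∑ e ∈ t', g e • rigidityRow p e b := by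
          rw [sum_filter]
          refine sum_congr rfl fun e he => ?_
          rw [rigidityRow_apply_of_sup_le (hmax e he)]
          split_ifs <;> simp
      _ = (∑ e ∈ t, g e • rigidityRow p e) b := by
          rw [sum_filter_of_ne fun e _ h => left_ne_zero_of_smul h, Finset.sum_apply]
          rfl
      _ = 0 := by rw [hsum]; rfl
  have hsub : ↑(t'.filter (·.sup = b)) ⊆ {e ∈ H.edgeSet | e.sup = b} := fun e he => by
    obtain ⟨he, hb⟩ := mem_filter.1 he
    exact ⟨ht (mem_filter.1 he).1, hb⟩
  exact (mem_filter.1 he₁).2 <| linearIndepOn_iff'.1 (linearIndepOn_sub_inf_of_sup_eq (hp b)) _ g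
    hsub hcoord e₁ (mem_filter.2 ⟨he₁, rfl⟩)

end Order

end Rigidity

section MomentCurve

variable {K ι : Type*} [Field K]

def momentCurve (d : ℕ) (x : K) : Fin d → K := fun j => x ^ ((j : ℕ) + 1)

theorem eq_zero_of_forall_sum_mul_pow_eq_zero {s : Finset ι} {t : ι → K} (ht : Set.InjOn t s)
    {d : ℕ} (hs : s.card ≤ d + 1) {w : ι → K} (h : ∀ m ≤ d, ∑ i ∈ s, w i * t i ^ m = 0) :
    ∀ i ∈ s, w i = 0 := by
  intro i hi
  let e := s.equivFin
  have hv := Matrix.eq_zero_of_forall_pow_sum_mul_pow_eq_zero (f := fun j => t (e.symm j))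
    (v := fun j => w (e.symm j))
    (fun a b hab => e.symm.injective (Subtype.ext (ht (e.symm a).2 (e.symm b).2 hab)))
    fun m => by
      rw [← h m (by omega)]
      exact (e.symm.sum_comp _).trans (s.sum_coe_sort fun x => w x * t x ^ (m : ℕ))
  simpa [e] using congrFun hv (e ⟨i, hi⟩)

theorem sum_smul_momentCurve_eq_zero_iff {s : Finset ι} {t : ι → K} {d : ℕ} {w : ι → K} :
    (∑ i ∈ s, w i = 0 ∧ ∑ i ∈ s, w i • momentCurve d (t i) = 0) ↔
      ∀ m ≤ d, ∑ i ∈ s, w i * t i ^ m = 0 := by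
  constructor
  · rintro ⟨h₀, h₁⟩ (_ | m) hm
    · simpa using h₀
    · simpa [momentCurve, Finset.sum_apply] using congrFun h₁ ⟨m, by omega⟩
  · intro h
    refine ⟨by simpa using h 0 (Nat.zero_le _), funext fun j => ?_⟩
    simpa [momentCurve, Finset.sum_apply] using h (j + 1) j.2

theorem exists_sum_smul_momentCurve_eq_zero {S : Finset ι} {t : ι → K} (ht : Set.InjOn t S)
    {d : ℕ} (hS : S.card = d + 2) :
    ∃ c : ι → K, ∑ i ∈ S, c i = 0 ∧ ∑ i ∈ S, c i • momentCurve d (t i) = 0 ∧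
      ∀ i ∈ S, c i ≠ 0 := by
  classical
  have hdep : ¬ LinearIndepOn K (fun i => fun m : Fin (d + 1) => t i ^ (m : ℕ)) (S : Set ι) :=
    fun hli => by
      have := hli.linearIndependent.fintype_card_le_finrank
      simp only [coe_sort_coe, Fintype.card_coe, finrank_fin_fun] at this
      omega
  obtain ⟨c, hc, i₀, hi₀, hci₀⟩ := not_linearIndepOn_finset_iff.1 hdep
  have hpow : ∀ m ≤ d, ∑ i ∈ S, c i * t i ^ m = 0 := fun m hm => by
    simpa [Finset.sum_apply] using congrFun hc ⟨m, by omega⟩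
  obtain ⟨hc₀, hc₁⟩ := sum_smul_momentCurve_eq_zero_iff.2 hpow
  -- A zero coefficient would leave a dependence among `d + 1` points of the curve.
  refine ⟨c, hc₀, hc₁, fun i hi hci => hci₀ ?_⟩
  have hrest := eq_zero_of_forall_sum_mul_pow_eq_zero (ht.mono (erase_subset i S))
    (d := d) (by rw [card_erase_of_mem hi]; omega) (w := c)
    fun m hm => by rw [sum_erase _ (by simp [hci])]; exact hpow m hm
  rcases eq_or_ne i₀ i with rfl | hne
  · exact hci
  · exact hrest i₀ (mem_erase.2 ⟨hne, hi₀⟩)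

theorem linearIndepOn_momentCurve_sub [DecidableEq ι] {W : Finset ι} {t : ι → K} {b : ι}
    (ht : Set.InjOn t ↑(insert b W)) (hb : b ∉ W) {d : ℕ} (hW : W.card ≤ d) :
    LinearIndepOn K (fun a => momentCurve d (t b) - momentCurve d (t a)) (W : Set ι) := by
  rw [linearIndepOn_finset_iff]
  intro g hg a ha
  set w : ι → K := fun i => if i = b then ∑ a ∈ W, g a else -g i
  have hwW : ∀ a ∈ W, w a = -g a := fun a ha => if_neg (ne_of_mem_of_not_mem ha hb)
  have hw : ∀ m ≤ d, ∑ i ∈ insert b W, w i * t i ^ m = 0 := by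
    refine sum_smul_momentCurve_eq_zero_iff.1 ⟨?_, ?_⟩
    · rw [sum_insert hb, sum_congr rfl hwW]
      simp [w]
    · rw [sum_insert hb, sum_congr rfl fun a ha => by rw [hwW a ha], ← hg]
      simp [w, smul_sub, sum_sub_distrib, sum_smul, ← sub_eq_add_neg]
  simpa [w, ne_of_mem_of_not_mem ha hb] using eq_zero_of_forall_sum_mul_pow_eq_zero ht
    (by rw [card_insert_of_notMem hb]; omega) hw a (mem_insert_of_mem ha)

end MomentCurve

theorem sGraph_adj {n k : ℕ} {i j : Fin n} :
    (sGraph n k).Adj i j ↔ i ≠ j ∧ ((i : ℕ) < k ∨ (j : ℕ) < k) := Iff.rfl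

theorem cliqueFree_sGraph (n k : ℕ) : (sGraph n k).CliqueFree (k + 2) := by
  intro t ht
  have hlow : #(t.filter fun x : Fin n => (x : ℕ) < k) ≤ k :=
    (card_le_card (filter_subset_filter _ (subset_univ t))).trans
      (Fin.card_filter_val_lt.trans_le (min_le_right _ _))
  have hhigh : 1 < #(t.filter fun x : Fin n => ¬ (x : ℕ) < k) := by
    have := card_filter_add_card_filter_not (s := t) (p := fun x : Fin n => (x : ℕ) < k)
    rw [ht.card_eq] at this
    omega
  obtain ⟨a, ha, b, hb, hab⟩ := one_lt_card.1 hhigh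
  rw [mem_filter] at ha hb
  exact ((sGraph_adj.1 (ht.isClique ha.1 hb.1 hab)).2.elim ha.2 hb.2)

theorem isKSat_sGraph (n k : ℕ) : IsKSat (sGraph n k) (k + 2) := by
  refine ⟨cliqueFree_sGraph n k, fun u v huv hnadj hfree => ?_⟩
  have hk : k ≤ (u : ℕ) ∧ k ≤ (v : ℕ) := by
    simp only [sGraph_adj, huv, ne_eq, not_false_eq_true, true_and, not_or, not_lt] at hnadj
    exact hnadj
  set L : Finset (Fin n) := {x | (x : ℕ) < k}
  have hL : ∀ x, x ∈ L ↔ (x : ℕ) < k := by simp [L]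
  apply hfree (insert u (insert v L))
  constructor
  · intro a ha b hb hab
    simp only [coe_insert, Set.mem_insert_iff, mem_coe, hL] at ha hb
    simp only [SimpleGraph.sup_adj, sGraph_adj, SimpleGraph.fromEdgeSet_adj,
      Set.mem_singleton_iff, Sym2.eq_iff]
    rcases ha with rfl | rfl | ha <;> rcases hb with rfl | rfl | hb <;> simp_all
  · have hu : u ∉ insert v L := by simp [hL, huv, hk.1]
    have hv : v ∉ L := by simp [hL, hk.2]
    rw [card_insert_of_notMem hu, card_insert_of_notMem hv, Fin.card_filter_val_lt]
    omega

theorem degree_sGraph {n k : ℕ} (hk : k ≤ n) [DecidableRel (sGraph n k).Adj] (v : Fin n) :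
    (sGraph n k).degree v = if (v : ℕ) < k then n - 1 else k := by
  rw [← SimpleGraph.card_neighborFinset_eq_degree, SimpleGraph.neighborFinset_eq_filter]
  split_ifs with hv
  · rw [filter_congr (q := (· ≠ v)) fun w _ => by simp [sGraph_adj, hv, eq_comm], filter_ne',
      card_erase_of_mem (mem_univ v), card_univ, Fintype.card_fin]
  · rw [filter_congr (q := fun w : Fin n => (w : ℕ) < k) fun w _ => ?_, Fin.card_filter_val_lt,
      min_eq_right hk]
    simp only [sGraph_adj, hv, false_or, and_iff_right_iff_imp]
    rintro hw rfl
    exact hv hw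

theorem ncard_edgeSet_sGraph {n k : ℕ} (hk : k ≤ n) :
    (sGraph n k).edgeSet.ncard = k * (n - k) + k.choose 2 := by
  classical
  have hsum := (sGraph n k).sum_degrees_eq_twice_card_edges
  have hhigh : #(univ.filter fun v : Fin n => ¬ (v : ℕ) < k) = n - k := by
    have := card_filter_add_card_filter_not (s := univ) (p := fun v : Fin n => (v : ℕ) < k)
    rw [Fin.card_filter_val_lt, card_univ, Fintype.card_fin] at this
    omega
  simp only [degree_sGraph hk, sum_ite, sum_const, smul_eq_mul, Fin.card_filter_val_lt,
    min_eq_right hk, hhigh] at hsum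
  rw [← SimpleGraph.coe_edgeFinset, Set.ncard_coe_finset]
  have hchoose : 2 * k.choose 2 = k * (k - 1) := by
    rw [Nat.choose_two_right, Nat.mul_div_cancel' (Nat.even_mul_pred_self k).two_dvd]
  have key : k * (n - 1) + (n - k) * k = 2 * (k * (n - k)) + k * (k - 1) := by
    obtain ⟨m, rfl⟩ := Nat.exists_eq_add_of_le hk
    rcases k with _ | k
    · simp
    · simp only [Nat.add_sub_cancel_left, Nat.add_sub_cancel, show k + 1 + m - 1 = k + m by omega]
      ring
  linarith

theorem ncard_edgeSet_sGraph_le_of_isKSat {n d : ℕ} {G : SimpleGraph (Fin n)}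
    (hG : IsKSat G (d + 2)) : (sGraph n d).edgeSet.ncard ≤ G.edgeSet.ncard := by
  set t : Fin n → ℝ := fun x => (x : ℕ)
  have ht : Function.Injective t := Nat.cast_injective.comp Fin.val_injective
  set p : Fin n → Fin d → ℝ := fun x => momentCurve d (t x)
  refine ncard_le_ncard_of_linearIndepOn (K := ℝ) (v := rigidityRow p) ?_ ?_
  · refine linearIndepOn_rigidityRow fun b => ?_
    set W : Finset (Fin n) := univ.filter fun a => a < b ∧ (a : ℕ) < d
    have hW : #W ≤ d := (card_le_card (monotone_filter_right _ fun _ _ => And.right)).trans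
      (Fin.card_filter_val_lt.trans_le (min_le_right _ _))
    refine (linearIndepOn_momentCurve_sub ht.injOn (by simp [W]) hW).mono ?_
    rintro a ⟨hab, -, ha | hb⟩
    · simp [W, hab, ha]
    · simp [W, hab, lt_trans (Fin.lt_def.1 hab) hb]
  · rintro _ ⟨e, -, rfl⟩
    exact rigidityRow_mem_span_of_isKSat hG
      (fun S hS => exists_sum_smul_momentCurve_eq_zero ht.injOn hS) e

/-- Erdős–Hajnal–Moon: the minimum number of edges in a `K_s`-saturated graph on `n`
vertices is `(s-2)(n-s+2) + C(s-2, 2)`. -/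
theorem stmt_0 (n s : ℕ) (hs : 2 ≤ s) (hn : s ≤ n) :
    IsLeast {m : ℕ | ∃ G : SimpleGraph (Fin n), IsKSat G s ∧ G.edgeSet.ncard = m}
      ((s - 2) * (n - s + 2) + (s - 2).choose 2) := by
  obtain ⟨d, rfl⟩ := Nat.exists_eq_add_of_le' hs
  rw [Nat.add_sub_cancel, show n - (d + 2) + 2 = n - d by omega,
    ← ncard_edgeSet_sGraph (by omega : d ≤ n)]
  exact ⟨⟨sGraph n d, isKSat_sGraph n d, rfl⟩,
    by rintro _ ⟨G, hG, rfl⟩; exact ncard_edgeSet_sGraph_le_of_isKSat hG⟩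
end

section
/- For all integers n and s with n ≥ s ≥ 2, if G is a K_s-saturated graph on n vertices with exactly (s−2)(n−s+2) + C(s−2, 2) edges, then G is isomorphic to S_{n,s−2}. -/
/-!
Let `H = Gᶜ` and `t = n - s + 1`. A vertex cover of `H` is the complement of a clique of `G`, so
`τ(H) ≥ t`; and if `ab` is an edge of `H`, the complement of the `s`-clique of `G + ab` covers
every edge of `H` except `ab` with `t - 1` vertices. So `H` is `τ`-critical, and the edge count
says that it has `C(t + 1, 2)` edges, which is the Erdős–Gallai bound for such graphs.

Equality forces `H = K_{t+1}` plus isolated vertices, i.e. `G ≅ S_{n,s-2}`. This comes from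
Hajnal's theorem `|V₀| + deg v ≤ 2t + 1` for every non-isolated vertex `v`, where `V₀` is the set
of non-isolated vertices: summing over `V₀` gives `|V₀| = t + 1` and `deg v = t` throughout.
Hajnal's bound follows from the surplus inequality `|S| + deg v ≤ |N(S)| + 1` for independent sets
`S ∋ v` of non-isolated vertices, proved by induction on `|S|`: if it fails, Hall's theorem
matches `N(S) \ N(v)` into `S - v`, and the covers of `H - vy` (`y ∈ N(v)`) are then so tight that
the vertices of `S - v` avoiding all of them form a smaller set violating the inequality.
-/

open Finset SimpleGraph

lemma Nat.add_choose_two (a b : ℕ) : (a + b).choose 2 = a.choose 2 + a * b + b.choose 2 := by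
  rw [Nat.add_choose_eq, Finset.Nat.sum_antidiagonal_eq_sum_range_succ_mk]
  simp only [sum_range_succ, sum_range_zero, Nat.reduceSub, Nat.choose_zero_right,
    Nat.choose_one_right]
  ring

lemma Finset.card_eq_and_forall_eq_of_sum_eq {α : Type*} (s : Finset α) (d : α → ℕ) {t : ℕ}
    (ht : 0 < t) (hsum : ∑ x ∈ s, d x = t * (t + 1)) (hle : ∀ x ∈ s, d x + 1 ≤ #s)
    (hkey : ∀ x ∈ s, #s + d x ≤ 2 * t + 1) : #s = t + 1 ∧ ∀ x ∈ s, d x = t := by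
  have h1 : t * (t + 1) + #s ≤ #s * #s := by
    simpa [sum_add_distrib, hsum] using sum_le_sum hle
  have h2 : #s * #s + t * (t + 1) ≤ #s * (2 * t + 1) := by
    simpa [sum_add_distrib, hsum] using sum_le_sum hkey
  have hs : #s = t + 1 := by nlinarith
  refine ⟨hs, (sum_eq_sum_iff_of_le fun x hx => ?_).1 ?_⟩
  · have := hkey x hx
    omega
  · rw [hsum, sum_const, hs, smul_eq_mul, mul_comm]

namespace SimpleGraph

variable {V : Type*}

/-- `τ`-criticality: `τ(H) ≥ t`, and `τ(H - e) < t` for every edge `e`. -/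
def IsCoverCritical (H : SimpleGraph V) (t : ℕ) : Prop :=
  (∀ C : Finset V, H.IsVertexCover C → t ≤ #C) ∧
    ∀ ⦃a b⦄, H.Adj a b → ∃ C : Finset V, #C < t ∧ (H.deleteEdges {s(a, b)}).IsVertexCover C

def MatchesInto (H : SimpleGraph V) (f : V → V) (Z T : Finset V) : Prop :=
  Set.InjOn f Z ∧ ∀ z ∈ Z, f z ∈ T ∧ H.Adj z (f z)

section Neighbors

variable [DecidableEq V] (H : SimpleGraph V) [LocallyFinite H]

def neighborsOf (S : Finset V) : Finset V := S.biUnion fun v => H.neighborFinset v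

variable {H}

@[simp]
lemma mem_neighborsOf {S : Finset V} {w : V} : w ∈ H.neighborsOf S ↔ ∃ a ∈ S, H.Adj a w := by
  simp [neighborsOf]

lemma neighborFinset_subset_neighborsOf {S : Finset V} {v : V} (hv : v ∈ S) :
    H.neighborFinset v ⊆ H.neighborsOf S :=
  fun _ hw => mem_neighborsOf.2 ⟨v, hv, (mem_neighborFinset _ _ _).1 hw⟩

lemma IsIndepSet.notMem_of_mem_neighborsOf {S : Finset V} (hS : H.IsIndepSet S) {w : V}
    (hw : w ∈ H.neighborsOf S) : w ∉ S := fun hwS => by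
  obtain ⟨a, ha, haw⟩ := mem_neighborsOf.1 hw
  exact hS ha hwS haw.ne haw

end Neighbors

lemma IsCoverCritical.notMem_of_isVertexCover_deleteEdges {H : SimpleGraph V} {t : ℕ}
    (hH : H.IsCoverCritical t) {a b : V} (hab : H.Adj a b) {C : Finset V}
    (hC : (H.deleteEdges {s(a, b)}).IsVertexCover C) (hCt : #C < t) : a ∉ C ∧ b ∉ C := by
  have hcover (c : V) (hc : c ∈ C) (hcab : c = a ∨ c = b) : H.IsVertexCover C := by
    intro x y hxy
    by_cases he : s(x, y) = s(a, b)
    · rcases Sym2.eq_iff.1 he with ⟨rfl, rfl⟩ | ⟨rfl, rfl⟩ <;> rcases hcab with rfl | rfl <;>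
        simp [hc]
    · exact hC (by simp [hxy, he])
  exact ⟨fun ha => (hH.1 C (hcover a ha (.inl rfl))).not_gt hCt,
    fun hb => (hH.1 C (hcover b hb (.inr rfl))).not_gt hCt⟩

section Critical

variable [Fintype V] [DecidableEq V] {H : SimpleGraph V} [DecidableRel H.Adj] {t : ℕ}
  {S C : Finset V} {v y : V}

lemma IsCoverCritical.neighborFinset_erase_subset (hH : H.IsCoverCritical t) (hvy : H.Adj v y)
    (hC : (H.deleteEdges {s(v, y)}).IsVertexCover C) (hCt : #C < t) :
    (H.neighborFinset v).erase y ⊆ C := by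
  intro x hx
  obtain ⟨hxy, hvx⟩ := mem_erase.1 hx
  have hne : s(v, x) ≠ s(v, y) := by simp [hxy, hvy.ne]
  exact (hC (deleteEdges_adj.2 ⟨(mem_neighborFinset _ _ _).1 hvx, hne⟩)).resolve_left
    (hH.notMem_of_isVertexCover_deleteEdges hvy hC hCt).1

lemma card_le_card_neighborsOf_inter (hv : v ∈ S)
    (hIH : ∀ B ⊂ S, v ∈ B → #B + H.degree v ≤ #(H.neighborsOf B) + 1)
    (hlt : #(H.neighborsOf S) + 1 < #S + H.degree v)
    {T : Finset V} (hT : T ⊆ H.neighborsOf S \ H.neighborFinset v) :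
    #T ≤ #(H.neighborsOf T ∩ S.erase v) := by
  set M := H.neighborsOf T ∩ S.erase v
  by_contra! hMT
  obtain ⟨z, hz⟩ : T.Nonempty := card_pos.1 (by omega)
  obtain ⟨hzN, hzv⟩ := mem_sdiff.1 (hT hz)
  obtain ⟨a, haS, haz⟩ := mem_neighborsOf.1 hzN
  have hav : a ≠ v := by
    rintro rfl
    exact hzv ((mem_neighborFinset _ _ _).2 haz)
  have haM : a ∈ M := mem_inter.2 ⟨mem_neighborsOf.2 ⟨z, hz, haz.symm⟩, mem_erase.2 ⟨hav, haS⟩⟩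
  set B := insert v (S.erase v \ M)
  have hBS : B ⊂ S := by
    refine (ssubset_iff_of_subset (insert_subset hv ?_)).2 ⟨a, haS, ?_⟩
    · exact sdiff_subset.trans (erase_subset _ _)
    · exact fun haB => (mem_insert.1 haB).elim hav fun h => (mem_sdiff.1 h).2 haM
  have hNB : H.neighborsOf B ⊆
      H.neighborFinset v ∪ ((H.neighborsOf S \ H.neighborFinset v) \ T) := by
    intro x hx
    obtain ⟨b, hb, hbx⟩ := mem_neighborsOf.1 hx
    by_cases hvx : x ∈ H.neighborFinset v
    · exact mem_union_left _ hvx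
    rcases mem_insert.1 hb with rfl | hb
    · exact absurd ((mem_neighborFinset _ _ _).2 hbx) hvx
    obtain ⟨hbS, hbM⟩ := mem_sdiff.1 hb
    refine mem_union_right _ (mem_sdiff.2 ⟨mem_sdiff.2 ⟨?_, hvx⟩, fun hxT => hbM ?_⟩)
    · exact mem_neighborsOf.2 ⟨b, mem_of_mem_erase hbS, hbx⟩
    · exact mem_inter.2 ⟨mem_neighborsOf.2 ⟨x, hxT, hbx.symm⟩, hbS⟩
  have hB := hIH B hBS (mem_insert_self _ _)
  have hvS := neighborFinset_subset_neighborsOf (H := H) hv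
  have hNBcard : #(H.neighborsOf B) ≤ H.degree v + (#(H.neighborsOf S) - H.degree v - #T) := by
    rw [← card_neighborFinset_eq_degree, ← card_sdiff_of_subset hvS, ← card_sdiff_of_subset hT]
    exact (card_le_card hNB).trans (card_union_le _ _)
  have hBcard : #B = #S - 1 - #M + 1 := by
    rw [card_insert_of_notMem (by simp), card_sdiff_of_subset inter_subset_right,
      card_erase_of_mem hv]
  have hM : #M ≤ #S - 1 := card_erase_of_mem hv ▸ card_le_card inter_subset_right
  have hT' : #T ≤ #(H.neighborsOf S) - H.degree v := by
    rw [← card_neighborFinset_eq_degree, ← card_sdiff_of_subset hvS]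
    exact card_le_card hT
  omega

lemma exists_matchesInto (hv : v ∈ S)
    (hIH : ∀ B ⊂ S, v ∈ B → #B + H.degree v ≤ #(H.neighborsOf B) + 1)
    (hlt : #(H.neighborsOf S) + 1 < #S + H.degree v) :
    ∃ f, H.MatchesInto f (H.neighborsOf S \ H.neighborFinset v) (S.erase v) := by
  set Z := H.neighborsOf S \ H.neighborFinset v
  obtain ⟨g, hg, hgZ⟩ := (all_card_le_biUnion_card_iff_exists_injective
      fun z : Z => H.neighborFinset z ∩ S.erase v).1 fun T => by
    calc #T = #(T.map (.subtype _)) := (card_map _).symm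
      _ ≤ #(H.neighborsOf (T.map (.subtype _)) ∩ S.erase v) :=
        card_le_card_neighborsOf_inter hv hIH hlt fun x hx => by
          obtain ⟨⟨y, hy⟩, -, rfl⟩ := mem_map.1 hx
          exact hy
      _ ≤ #(T.biUnion fun z => H.neighborFinset z ∩ S.erase v) :=
        card_le_card fun x hx => by
          obtain ⟨hxN, hxS⟩ := mem_inter.1 hx
          obtain ⟨a, ha, hax⟩ := mem_neighborsOf.1 hxN
          obtain ⟨z, hz, rfl⟩ := mem_map.1 ha
          exact mem_biUnion.2 ⟨z, hz, mem_inter.2 ⟨(mem_neighborFinset _ _ _).2 hax, hxS⟩⟩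
  refine ⟨fun x => if hx : x ∈ Z then g ⟨x, hx⟩ else x, fun x hx x' hx' h => ?_, fun z hz => ?_⟩
  · simp only [dif_pos (mem_coe.1 hx), dif_pos (mem_coe.1 hx')] at h
    exact congrArg Subtype.val (hg h)
  · simpa [dif_pos hz, and_comm] using hgZ ⟨z, hz⟩

lemma IsCoverCritical.add_card_inter_le (hH : H.IsCoverCritical t) (hv : v ∈ S)
    (hC : (H.deleteEdges {s(v, y)}).IsVertexCover C) :
    t + #(C ∩ (S ∪ H.neighborsOf S)) ≤ #C + #(H.neighborsOf S) := by
  have hcover : H.IsVertexCover ↑(C \ (S ∪ H.neighborsOf S) ∪ H.neighborsOf S) := by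
    intro x w hxw
    by_cases hx : x ∈ S
    · exact .inr (by simpa using .inr ⟨x, hx, hxw⟩)
    by_cases hw : w ∈ S
    · exact .inl (by simpa using .inr ⟨w, hw, hxw.symm⟩)
    have hne : s(x, w) ≠ s(v, y) := by
      rintro h
      rcases Sym2.eq_iff.1 h with ⟨rfl, -⟩ | ⟨-, rfl⟩
      exacts [hx hv, hw hv]
    have hxw' := hC (deleteEdges_adj.2 ⟨hxw, hne⟩)
    simp only [coe_union, coe_sdiff, Set.mem_union, Set.mem_sdiff, mem_coe] at hxw' ⊢
    tauto
  have := hH.1 _ hcover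
  have := card_union_le (C \ (S ∪ H.neighborsOf S)) (H.neighborsOf S)
  have := card_sdiff_add_card_inter C (S ∪ H.neighborsOf S)
  omega

lemma IsCoverCritical.exists_eq_of_mem_isVertexCover (hH : H.IsCoverCritical t)
    (hS : H.IsIndepSet S) (hv : v ∈ S) {f : V → V}
    (hf : H.MatchesInto f (H.neighborsOf S \ H.neighborFinset v) (S.erase v))
    (hvy : H.Adj v y) (hC : (H.deleteEdges {s(v, y)}).IsVertexCover C) (hCt : #C < t)
    {a : V} (haC : a ∈ C) (ha : a ∈ S.erase v) :
    ∃ z ∈ H.neighborsOf S \ H.neighborFinset v, z ∉ C ∧ f z = a := by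
  have hZ (x) (hx : x ∈ (H.neighborsOf S).erase y) (hxC : x ∉ C) :
      x ∈ H.neighborsOf S \ H.neighborFinset v :=
    mem_sdiff.2 ⟨mem_of_mem_erase hx, fun hvx => hxC
      (hH.neighborFinset_erase_subset hvy hC hCt (mem_erase.2 ⟨ne_of_mem_erase hx, hvx⟩))⟩
  -- `g` injects `N(S) - y` into `C ∩ (S ∪ N(S))`, which is no larger, so `g` is onto.
  set g : V → V := fun x => if x ∈ C then x else f x
  have hmaps : Set.MapsTo g ↑((H.neighborsOf S).erase y) ↑(C ∩ (S ∪ H.neighborsOf S)) := by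
    intro x hx
    by_cases hxC : x ∈ C
    · simp [g, hxC, mem_of_mem_erase hx]
    · obtain ⟨hfx, hxfx⟩ := hf.2 x (hZ x hx hxC)
      have hne : s(x, f x) ≠ s(v, y) := by
        rintro h
        rcases Sym2.eq_iff.1 h with ⟨rfl, -⟩ | ⟨-, h⟩
        exacts [hS.notMem_of_mem_neighborsOf (mem_of_mem_erase hx) hv, ne_of_mem_erase hfx h]
      have := (hC (deleteEdges_adj.2 ⟨hxfx, hne⟩)).resolve_left hxC
      simp [g, hxC, this, mem_of_mem_erase hfx]
  have hinj : Set.InjOn g ((H.neighborsOf S).erase y) := by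
    intro x hx x' hx' h
    have hxN := hS.notMem_of_mem_neighborsOf (mem_of_mem_erase hx)
    have hx'N := hS.notMem_of_mem_neighborsOf (mem_of_mem_erase hx')
    by_cases hxC : x ∈ C <;> by_cases hx'C : x' ∈ C <;>
      simp only [g, hxC, hx'C, if_true, if_false] at h
    · exact h
    · exact absurd (mem_of_mem_erase (hf.2 x' (hZ x' hx' hx'C)).1) (h ▸ hxN)
    · exact absurd (mem_of_mem_erase (hf.2 x (hZ x hx hxC)).1) (h ▸ hx'N)
    · exact hf.1 (hZ x hx hxC) (hZ x' hx' hx'C) h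
  have hcard : #(C ∩ (S ∪ H.neighborsOf S)) ≤ #((H.neighborsOf S).erase y) := by
    have := hH.add_card_inter_le hv hC
    rw [card_erase_of_mem (mem_neighborsOf.2 ⟨v, hv, hvy⟩)]
    omega
  obtain ⟨x, hx, rfl⟩ := surjOn_of_injOn_of_card_le g hmaps hinj hcard
    (mem_inter.2 ⟨haC, mem_union_left _ (mem_of_mem_erase ha)⟩)
  by_cases hxC : x ∈ C
  · simp only [g, hxC, if_true] at ha
    exact absurd (mem_of_mem_erase ha) (hS.notMem_of_mem_neighborsOf (mem_of_mem_erase hx))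
  · exact ⟨x, hZ x hx hxC, hxC, by simp [g, hxC]⟩

lemma IsCoverCritical.exists_card_neighborsOf_lt (hH : H.IsCoverCritical t)
    (hS : H.IsIndepSet S) (hv : v ∈ S) {f : V → V}
    (hf : H.MatchesInto f (H.neighborsOf S \ H.neighborFinset v) (S.erase v))
    {u : V} (hu : u ∈ S.erase v)
    (hfu : ∀ z ∈ H.neighborsOf S \ H.neighborFinset v, f z ≠ u) :
    ∃ A ⊆ S.erase v, u ∈ A ∧ #(H.neighborsOf A) < #A := by
  classical
  set A := {a ∈ S.erase v | ∀ y (C : Finset V), H.Adj v y →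
    (H.deleteEdges {s(v, y)}).IsVertexCover C → #C < t → a ∉ C}
  -- `N(A)` lies in every such cover `C`, and `f` maps it injectively into `A - u`.
  have huA : u ∈ A := by
    refine mem_filter.2 ⟨hu, fun y C hvy hC hCt huC => ?_⟩
    obtain ⟨z, hz, -, rfl⟩ := hH.exists_eq_of_mem_isVertexCover hS hv hf hvy hC hCt huC hu
    exact hfu z hz rfl
  have hmem (w) (hw : w ∈ H.neighborsOf A) (y) (C : Finset V) (hvy : H.Adj v y)
      (hC : (H.deleteEdges {s(v, y)}).IsVertexCover C) (hCt : #C < t) : w ∈ C := by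
    obtain ⟨a, ha, haw⟩ := mem_neighborsOf.1 hw
    obtain ⟨haS, haC⟩ := mem_filter.1 ha
    have hne : s(a, w) ≠ s(v, y) := by
      rintro h
      rcases Sym2.eq_iff.1 h with ⟨rfl, -⟩ | ⟨rfl, rfl⟩
      exacts [ne_of_mem_erase haS rfl, hS (mem_of_mem_erase haS) hv haw.ne haw]
    exact (hC (deleteEdges_adj.2 ⟨haw, hne⟩)).resolve_left (haC y C hvy hC hCt)
  have hAZ : H.neighborsOf A ⊆ H.neighborsOf S \ H.neighborFinset v := by
    intro w hw
    obtain ⟨a, ha, haw⟩ := mem_neighborsOf.1 hw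
    refine mem_sdiff.2 ⟨mem_neighborsOf.2 ⟨a, mem_of_mem_erase (mem_filter.1 ha).1, haw⟩,
      fun hvw => ?_⟩
    have hvw := (mem_neighborFinset _ _ _).1 hvw
    obtain ⟨C, hCt, hC⟩ := hH.2 hvw
    exact (hH.notMem_of_isVertexCover_deleteEdges hvw hC hCt).2 (hmem w hw w C hvw hC hCt)
  have hmaps : Set.MapsTo f ↑(H.neighborsOf A) ↑(A.erase u) := by
    intro w hw
    obtain ⟨hfw, -⟩ := hf.2 w (hAZ hw)
    refine mem_erase.2 ⟨hfu w (hAZ hw), mem_filter.2 ⟨hfw, fun y C hvy hC hCt hfwC => ?_⟩⟩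
    obtain ⟨z, hz, hzC, hzw⟩ := hH.exists_eq_of_mem_isVertexCover hS hv hf hvy hC hCt hfwC hfw
    exact hzC (hf.1 hz (hAZ hw) hzw ▸ hmem w hw y C hvy hC hCt)
  have hcard := card_le_card_of_injOn f hmaps (hf.1.mono (coe_subset.2 hAZ))
  rw [card_erase_of_mem huA] at hcard
  exact ⟨A, filter_subset _ _, huA, by have := card_pos.2 ⟨u, huA⟩; omega⟩

theorem IsCoverCritical.card_add_degree_le (hH : H.IsCoverCritical t) (hS : H.IsIndepSet S)
    (hdeg : ∀ a ∈ S, 0 < H.degree a) (hv : v ∈ S) :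
    #S + H.degree v ≤ #(H.neighborsOf S) + 1 := by
  induction S using Finset.strongInduction generalizing v with
  | _ S ih =>
  have ih' {B} (hB : B ⊂ S) {b} (hb : b ∈ B) := ih B hB (hS.mono (coe_subset.2 hB.subset))
    (fun a ha => hdeg a (hB.subset ha)) hb
  by_contra! hlt
  obtain ⟨f, hf⟩ := exists_matchesInto hv (fun B hB hvB => ih' hB hvB) hlt
  have hZ : #((H.neighborsOf S \ H.neighborFinset v).image f) < #(S.erase v) := by
    have hvS := card_le_card (neighborFinset_subset_neighborsOf (H := H) hv)
    refine card_image_le.trans_lt ?_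
    rw [card_sdiff_of_subset (neighborFinset_subset_neighborsOf hv), card_erase_of_mem hv]
    rw [card_neighborFinset_eq_degree] at hvS ⊢
    omega
  obtain ⟨u, hu, hfu⟩ := exists_mem_notMem_of_card_lt_card hZ
  obtain ⟨A, hAS, huA, hA⟩ := hH.exists_card_neighborsOf_lt hS hv hf hu
    fun z hz hzu => hfu (mem_image.2 ⟨z, hz, hzu⟩)
  have hAS' : A ⊂ S := hAS.trans_ssubset (erase_ssubset hv)
  have := ih' hAS' huA
  have := hdeg u (hAS'.subset huA)
  omega

theorem IsCoverCritical.card_add_degree_le_two_mul (hH : H.IsCoverCritical t)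
    (hv : 0 < H.degree v) : #{x | 0 < H.degree x} + H.degree v ≤ 2 * t + 1 := by
  set V₀ : Finset V := {x | 0 < H.degree x}
  have hV₀ {x y} (hxy : H.Adj x y) : x ∈ V₀ := by
    simpa [V₀] using hxy.degree_pos_left
  obtain ⟨w, hvw⟩ := (H.degree_pos_iff_exists_adj v).1 hv
  obtain ⟨C, hCt, hC⟩ := hH.2 hvw
  obtain ⟨hvC, -⟩ := hH.notMem_of_isVertexCover_deleteEdges hvw hC hCt
  set I := (V₀ \ C).erase w
  have hI : H.IsIndepSet I := by
    intro a ha b hb _ hab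
    simp only [I, coe_erase, coe_sdiff, Set.mem_sdiff, mem_coe,
      Set.mem_singleton_iff] at ha hb
    have hne : s(a, b) ≠ s(v, w) := by
      rintro h
      rcases Sym2.eq_iff.1 h with ⟨-, rfl⟩ | ⟨rfl, -⟩
      exacts [hb.2 rfl, ha.2 rfl]
    rcases hC (deleteEdges_adj.2 ⟨hab, hne⟩) with h | h
    exacts [ha.1.2 h, hb.1.2 h]
  have hvI : v ∈ I := by simp [I, V₀, hv, hvC, hvw.ne]
  have hsurplus := hH.card_add_degree_le hI
    (fun a ha => by simpa [V₀] using (mem_sdiff.1 (mem_of_mem_erase ha)).1) hvI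
  have hNI : #(H.neighborsOf I) + #I ≤ #V₀ := by
    have hdisj : Disjoint (H.neighborsOf I) I :=
      Finset.disjoint_left.2 fun _ hx => hI.notMem_of_mem_neighborsOf hx
    rw [← card_union_of_disjoint hdisj]
    refine card_le_card (union_subset (fun x hx => ?_) ((erase_subset _ _).trans sdiff_subset))
    obtain ⟨a, -, hax⟩ := mem_neighborsOf.1 hx
    exact hV₀ hax.symm
  have hV₀I : #V₀ ≤ #I + #C + 1 := by
    calc #V₀ ≤ #(insert w (I ∪ C)) := card_le_card fun x hx => by
          by_cases hxw : x = w <;> by_cases hxC : x ∈ C <;> simp [I, hx, hxw, hxC]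
      _ ≤ #(I ∪ C) + 1 := card_insert_le _ _
      _ ≤ #I + #C + 1 := by grw [card_union_le]
  omega

theorem IsCoverCritical.exists_adj_iff_of_card_edgeFinset (hH : H.IsCoverCritical t) (ht : 0 < t)
    (hE : #H.edgeFinset = (t + 1).choose 2) :
    ∃ K : Finset V, #K = t + 1 ∧ ∀ a b, H.Adj a b ↔ a ≠ b ∧ a ∈ K ∧ b ∈ K := by
  set V₀ : Finset V := {x | 0 < H.degree x}
  have hV₀ {x y} (hxy : H.Adj x y) : x ∈ V₀ := by
    simpa [V₀] using hxy.degree_pos_left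
  have hnbr (x) : H.neighborFinset x ⊆ V₀.erase x := fun y hy => by
    have hxy := (mem_neighborFinset _ _ _).1 hy
    exact mem_erase.2 ⟨hxy.ne.symm, hV₀ hxy.symm⟩
  have hsum : ∑ x ∈ V₀, H.degree x = t * (t + 1) := by
    have := Nat.add_one_mul_choose_eq t 1
    rw [sum_filter_of_ne fun x _ h => Nat.pos_of_ne_zero h, sum_degrees_eq_twice_card_edges, hE]
    simp only [Nat.choose_one_right] at this
    linarith
  obtain ⟨hcard, hdeg⟩ := V₀.card_eq_and_forall_eq_of_sum_eq (fun x => H.degree x) ht hsum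
    (fun x hx => by
      have := card_le_card (hnbr x)
      rw [card_erase_of_mem hx, card_neighborFinset_eq_degree] at this
      have := card_pos.2 ⟨x, hx⟩
      omega)
    fun x hx => hH.card_add_degree_le_two_mul (by simpa [V₀] using hx)
  refine ⟨V₀, hcard, fun a b => ⟨fun hab => ⟨hab.ne, hV₀ hab, hV₀ hab.symm⟩, ?_⟩⟩
  rintro ⟨hne, ha, hb⟩
  have : H.neighborFinset a = V₀.erase a := eq_of_subset_of_card_le (hnbr a) (by
    rw [card_erase_of_mem ha, hcard, card_neighborFinset_eq_degree, hdeg a ha]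
    simp)
  exact (mem_neighborFinset _ _ _).1 (this ▸ mem_erase.2 ⟨hne.symm, hb⟩)

end Critical

lemma card_edgeFinset_compl_add_card_edgeFinset [Fintype V] [DecidableEq V] (G : SimpleGraph V)
    [DecidableRel G.Adj] : #Gᶜ.edgeFinset + #G.edgeFinset = (Fintype.card V).choose 2 := by
  rw [← card_union_of_disjoint (disjoint_edgeFinset.2 disjoint_compl_left),
    ← card_edgeFinset_top_eq_card_choose_two]
  congr 1
  ext e
  simp [← edgeFinset_sup]

theorem isCoverCritical_compl_of_isKSat [Fintype V] {G : SimpleGraph V} {s : ℕ} (hG : IsKSat G s)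
    (hs : s ≤ Fintype.card V) : Gᶜ.IsCoverCritical (Fintype.card V - s + 1) := by
  classical
  refine ⟨fun C hC => ?_, fun a b hab => ?_⟩
  · have hclique : G.IsClique (↑Cᶜ : Set V) := by
      intro x hx y hy hxy
      by_contra hnadj
      rcases hC ((compl_adj G x y).2 ⟨hxy, hnadj⟩) with h | h <;> simp_all
    by_contra! hlt
    obtain ⟨T, hT, hTcard⟩ := exists_subset_card_eq (show s ≤ #Cᶜ by rw [card_compl]; omega)
    exact hG.1 T ⟨hclique.subset (coe_subset.2 hT), hTcard⟩
  · obtain ⟨T, hT⟩ := not_forall_not.1 (hG.2 a b hab.ne ((compl_adj G a b).1 hab).2)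
    refine ⟨Tᶜ, by rw [card_compl, hT.card_eq]; omega, fun x y hxy => ?_⟩
    by_contra! h
    obtain ⟨hxy, hne⟩ := deleteEdges_adj.1 hxy
    have := hT.isClique (by simpa using h.1) (by simpa using h.2) hxy.ne
    simp only [sup_adj, fromEdgeSet_adj] at this
    exact ((compl_adj G x y).1 hxy).2 (this.resolve_right fun h' => hne h'.1)

lemma nonempty_iso_sGraph {n k : ℕ} {G : SimpleGraph (Fin n)} (D : Finset (Fin n)) (hD : #D = k)
    (hG : ∀ a b, G.Adj a b ↔ a ≠ b ∧ (a ∈ D ∨ b ∈ D)) : Nonempty (G ≃g sGraph n k) := by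
  have hk : k ≤ n := hD ▸ (card_le_univ D).trans_eq (Fintype.card_fin n)
  let e : {x // x ∈ D} ≃ {x : Fin n // (x : ℕ) < k} :=
    Fintype.equivOfCardEq (by simp [hD, Fintype.card_subtype, Fin.card_filter_val_lt, hk])
  have he (a) : (e.extendSubtype a : ℕ) < k ↔ a ∈ D :=
    ⟨fun h => by_contra fun ha => e.extendSubtype_not_mem a ha h, e.extendSubtype_mem a⟩
  exact ⟨⟨e.extendSubtype, by simp [sGraph, hG, he]⟩⟩

end SimpleGraph

/-- A `K_s`-saturated graph on `n` vertices with exactly `(s-2)(n-s+2) + C(s-2,2)` edges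
is isomorphic to `S_{n,s-2}`. -/
theorem stmt_1 (n s : ℕ) (hs : 2 ≤ s) (hn : s ≤ n) (G : SimpleGraph (Fin n))
    (hG : IsKSat G s)
    (hE : G.edgeSet.ncard = (s - 2) * (n - s + 2) + (s - 2).choose 2) :
    Nonempty (G ≃g sGraph n (s - 2)) := by
  classical
  have hcrit := isCoverCritical_compl_of_isKSat hG (by simpa using hn)
  rw [Fintype.card_fin] at hcrit
  have hEc : #Gᶜ.edgeFinset = (n - s + 1 + 1).choose 2 := by
    have hsum := card_edgeFinset_compl_add_card_edgeFinset G
    have hsplit := Nat.add_choose_two (s - 2) (n - s + 2)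
    rw [← coe_edgeFinset, Set.ncard_coe_finset] at hE
    rw [Fintype.card_fin, hE] at hsum
    rw [show s - 2 + (n - s + 2) = n by omega] at hsplit
    rw [show n - s + 1 + 1 = n - s + 2 by omega]
    omega
  obtain ⟨K, hK, hadj⟩ := hcrit.exists_adj_iff_of_card_edgeFinset (by omega) hEc
  refine nonempty_iso_sGraph Kᶜ (by rw [card_compl, hK, Fintype.card_fin]; omega) fun a b => ?_
  have hab := hadj a b
  have : G.Adj a b → a ≠ b := Adj.ne
  rw [compl_adj] at hab
  simp only [mem_compl]
  tauto
end

section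
/- For every integer n ≥ 3, a K_3-saturated graph G on n vertices contains no two disjoint edges (i.e., N(M_2, G) = 0) if and only if G is isomorphic to the star S_{n,1}. In particular, S_{n,1} is the unique K_3-saturated graph on n vertices minimizing the number of copies of M_2. -/
/-!
Let `G` be triangle-free with any two edges meeting. If no vertex lies on all edges, take an
edge `xy`: an edge avoiding `x` meets `xy` at `y`, giving an edge `yz` with `z ≠ x`, and
likewise there is an edge `xw` with `w ≠ y`. These two edges can only meet in `z = w`, which
closes the triangle `xyz`. So all edges pass through one vertex `c`, and `K₃`-saturation makes
`c` adjacent to every other vertex `w`: a common neighbour of `w` and `c` would span an edge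
missing `c`. Conversely the star is `K₃`-saturated with no two disjoint edges, so the minimum
of `N(M₂, ·)` over `K₃`-saturated graphs is `0`.
-/

open Finset SimpleGraph

namespace SimpleGraph

variable {V : Type*} {G : SimpleGraph V}

def starGraphIso [DecidableEq V] (c d : V) : starGraph c ≃g starGraph d where
  toEquiv := Equiv.swap c d
  map_rel_iff' {a b} := by
    simp only [starGraph_adj, ne_eq, (Equiv.swap c d).injective.eq_iff,
      Equiv.swap_apply_eq_iff, Equiv.swap_apply_right]

def EdgesIntersecting (G : SimpleGraph V) : Prop :=
  ∀ ⦃a b c d⦄, G.Adj a b → G.Adj c d → a = c ∨ a = d ∨ b = c ∨ b = d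

lemma Iso.edgesIntersecting {W : Type*} {H : SimpleGraph W} (φ : G ≃g H)
    (hH : H.EdgesIntersecting) : G.EdgesIntersecting := by
  intro a b c d hab hcd
  simpa only [φ.injective.eq_iff] using hH (φ.map_adj_iff.2 hab) (φ.map_adj_iff.2 hcd)

lemma starGraph_edgesIntersecting (c : V) : (starGraph c).EdgesIntersecting := by
  intro a b c d hab hcd
  simp only [starGraph_adj] at hab hcd
  grind

lemma starGraph_cliqueFree_three (c : V) : (starGraph c).CliqueFree 3 := by
  classical
  intro t ht
  obtain ⟨a, b, d, hab, had, hbd, -⟩ := is3Clique_iff.1 ht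
  simp only [starGraph_adj] at hab had hbd
  grind

lemma EdgesIntersecting.exists_forall_adj_eq_or_eq (hI : G.EdgesIntersecting)
    (h3 : G.CliqueFree 3) {x y : V} (hxy : G.Adj x y) :
    ∃ c, ∀ ⦃a b⦄, G.Adj a b → a = c ∨ b = c := by
  classical
  by_contra! h
  have avoid : ∀ p q, G.Adj p q → ∃ z, G.Adj q z ∧ z ≠ p := by
    intro p q hpq
    obtain ⟨a, b, hab, hap, hbp⟩ := h p
    rcases hI hpq hab with rfl | rfl | rfl | rfl
    · exact absurd rfl hap
    · exact absurd rfl hbp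
    · exact ⟨b, hab, hbp⟩
    · exact ⟨a, hab.symm, hap⟩
  obtain ⟨z, hyz, hzx⟩ := avoid x y hxy
  obtain ⟨w, hxw, hwy⟩ := avoid y x hxy.symm
  rcases hI hyz hxw with h | rfl | rfl | rfl
  · exact hxy.ne h.symm
  · exact hwy rfl
  · exact hzx rfl
  · exact is3Clique_triple_iff.2 ⟨hxy, hxw, hyz⟩ |>.not_cliqueFree h3

end SimpleGraph

section

variable {V : Type*} {G : SimpleGraph V}

lemma isKSat_starGraph (c : V) : IsKSat (starGraph c) 3 := by
  classical
  refine ⟨starGraph_cliqueFree_three c, fun u v huv hn => ?_⟩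
  obtain ⟨huc, hvc⟩ : u ≠ c ∧ v ≠ c := by simpa [huv] using hn
  have : (starGraph c ⊔ edge u v).IsNClique 3 {c, u, v} :=
    is3Clique_triple_iff.2 ⟨Or.inl (by simp [huc.symm]), Or.inl (by simp [hvc.symm]),
      Or.inr ((edge_adj ..).2 ⟨Or.inl ⟨rfl, rfl⟩, huv⟩)⟩
  exact this.not_cliqueFree

lemma IsKSat.maximal_cliqueFree {s : ℕ} (hG : IsKSat G s) :
    Maximal (fun H => H.CliqueFree s) G := by
  refine ⟨hG.1, fun H hH hle u v huv => ?_⟩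
  by_contra hn
  exact hG.2 u v huv.ne hn (hH.anti (sup_le hle ((edge_le_iff H).2 (Or.inr huv))))

lemma IsKSat.exists_common_neighbor (hG : IsKSat G 3) {u v : V} (huv : u ≠ v)
    (hn : ¬G.Adj u v) : ∃ w, G.Adj u w ∧ G.Adj v w := by
  classical
  obtain ⟨s, hus, hvs, hu, hv⟩ :=
    exists_of_maximal_cliqueFree_not_adj hG.maximal_cliqueFree huv hn
  have hs : #s = 1 := by simpa [card_insert_of_notMem hus] using hu.card_eq
  obtain ⟨w, rfl⟩ := card_eq_one.1 hs
  refine ⟨w, ?_, ?_⟩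
  · exact hu.1 (by simp) (by simp) (by simpa using hus)
  · exact hv.1 (by simp) (by simp) (by simpa using hvs)

lemma IsKSat.eq_starGraph [Nontrivial V] (hG : IsKSat G 3) (hI : G.EdgesIntersecting) :
    ∃ c, G = starGraph c := by
  obtain ⟨x, y, hxy⟩ : ∃ x y, G.Adj x y := by
    obtain ⟨u, v, huv⟩ := exists_pair_ne V
    by_cases h : G.Adj u v
    · exact ⟨u, v, h⟩
    · obtain ⟨w, huw, -⟩ := hG.exists_common_neighbor huv h
      exact ⟨u, w, huw⟩
  obtain ⟨c, hc⟩ := hI.exists_forall_adj_eq_or_eq hG.1 hxy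
  have hcw : ∀ w, w ≠ c → G.Adj c w := by
    intro w hwc
    by_contra hn
    obtain ⟨z, hcz, hwz⟩ := hG.exists_common_neighbor hwc.symm hn
    exact (hc hwz).elim hwc (fun hzc => hcz.ne hzc.symm)
  refine ⟨c, ?_⟩
  ext a b
  refine ⟨fun hab => starGraph_adj.2 ⟨hab.ne, hc hab⟩, ?_⟩
  rw [starGraph_adj]
  rintro ⟨hab, rfl | rfl⟩
  · exact hcw b hab.symm
  · exact (hcw a hab).symm

lemma numMatchings_two_eq_zero_iff [Finite V] :
    numMatchings G 2 = 0 ↔ G.EdgesIntersecting := by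
  classical
  rw [numMatchings, Set.ncard_eq_zero, Set.eq_empty_iff_forall_notMem]
  constructor
  · intro h a b c d hab hcd
    by_contra! hne
    have hne' : s(a, b) ≠ s(c, d) := by simp [hne.1, hne.2.1]
    refine h {s(a, b), s(c, d)} ⟨card_pair hne', by simp [hab, hcd], ?_⟩
    simp only [mem_insert, mem_singleton]
    grind
  · rintro hI M ⟨hcard, hedge, hdisj⟩
    obtain ⟨e, f, hef, rfl⟩ := card_eq_two.1 hcard
    induction e using Sym2.ind with | _ a b =>
    induction f using Sym2.ind with | _ c d =>
    have hdisj := hdisj _ (by simp) _ (by simp) hef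
    simp only [Sym2.mem_iff] at hdisj
    have := hI (hedge s(a, b) (by simp)) (hedge s(c, d) (by simp))
    grind

end

lemma sGraph_one_eq_starGraph (n : ℕ) [NeZero n] : sGraph n 1 = starGraph 0 := by
  ext i j
  simp only [sGraph, starGraph_adj, Fin.ext_iff, Fin.val_zero]
  omega

lemma satM_two_three_eq_zero (n : ℕ) [NeZero n] : satM n 2 3 = 0 :=
  Nat.sInf_eq_zero.2 <| Or.inl
    ⟨starGraph 0, isKSat_starGraph 0,
      numMatchings_two_eq_zero_iff.2 (starGraph_edgesIntersecting 0)⟩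

/-- For `n ≥ 3`, a `K_3`-saturated graph on `n` vertices has no two disjoint edges iff it
is isomorphic to the star `S_{n,1}`; in particular `S_{n,1}` is the unique `K_3`-saturated
graph on `n` vertices minimizing the number of copies of `M_2`. -/
theorem stmt_6 (n : ℕ) (hn : 3 ≤ n) (G : SimpleGraph (Fin n)) (hG : IsKSat G 3) :
    (numMatchings G 2 = 0 ↔ Nonempty (G ≃g sGraph n 1)) ∧
    (numMatchings G 2 = satM n 2 3 → Nonempty (G ≃g sGraph n 1)) := by
  have : NeZero n := ⟨by omega⟩
  have : Nontrivial (Fin n) := Fin.nontrivial_iff_two_le.2 (by omega)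
  have key : numMatchings G 2 = 0 ↔ Nonempty (G ≃g sGraph n 1) := by
    rw [numMatchings_two_eq_zero_iff, sGraph_one_eq_starGraph]
    constructor
    · intro hI
      obtain ⟨c, rfl⟩ := hG.eq_starGraph hI
      exact ⟨starGraphIso c 0⟩
    · rintro ⟨φ⟩
      exact φ.edgesIntersecting (starGraph_edgesIntersecting 0)
  exact ⟨key, fun h => key.1 (h.trans (satM_two_three_eq_zero n))⟩
end

section
/- Let s and k be integers with 2 ≤ k ≤ s−2, let G be a K_s-saturated graph, let v be a vertex of G with degree d_G(v) ≥ 2ks, and let I be an independent set of G of size k−1 with v ∉ I. Then the number of matchings of size k in G whose vertex set contains I ∪ {v} is at least d_G(v)/2. -/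
open Finset SimpleGraph

section

variable {V : Type*} {G : SimpleGraph V}

lemma SimpleGraph.IsNClique.le_degree_add_one [Fintype V] [DecidableEq V] [DecidableRel G.Adj]
    {n : ℕ} {t : Finset V} (ht : G.IsNClique n t) {a : V} (ha : a ∈ t) :
    n ≤ G.degree a + 1 := by
  have hsub : t.erase a ⊆ G.neighborFinset a := fun b hb =>
    (G.mem_neighborFinset a b).2 (ht.1 ha (mem_of_mem_erase hb) (ne_of_mem_erase hb).symm)
  have := card_le_card hsub
  rw [card_erase_of_mem ha, ht.2, card_neighborFinset_eq_degree] at this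
  omega

lemma IsKSat.sub_two_le_degree [Fintype V] [DecidableRel G.Adj] {s : ℕ} (hG : IsKSat G s)
    {a w : V} (haw : a ≠ w) (hna : ¬ G.Adj a w) : s - 2 ≤ G.degree a := by
  classical
  obtain ⟨t, ht⟩ := not_forall_not.1 (hG.2 a w haw hna)
  have ht' : (G ⊔ edge w a).IsNClique s t := edge_comm a w ▸ ht
  have ha : a ∈ t := hG.1.mem_of_sup_edge_isNClique ht
  have hw : w ∈ t := hG.1.mem_of_sup_edge_isNClique ht'
  have := (ht'.erase_of_sup_edge_of_mem hw).le_degree_add_one (mem_erase_of_ne_of_mem haw ha)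
  omega

lemma IsKSat.min_le_degree [Fintype V] [DecidableRel G.Adj] {s : ℕ} (hG : IsKSat G s) (a : V) :
    min (s - 2) (Fintype.card V - 1) ≤ G.degree a := by
  by_cases hu : G.IsUniversal a
  · exact (min_le_right _ _).trans ((G.degree_eq_card_sub_one a).2 hu).ge
  · obtain ⟨w, haw, hna⟩ : ∃ w, a ≠ w ∧ ¬ G.Adj a w := by simpa [IsUniversal] using hu
    exact (min_le_left _ _).trans (hG.sub_two_le_degree haw hna)

namespace SimpleGraph

lemma exists_injOn_adj_notMem [Fintype V] [DecidableEq V] [DecidableRel G.Adj]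
    {J F : Finset V} (hJ : ∀ a ∈ J, ∀ b ∈ J, ¬ G.Adj a b)
    (hdeg : ∀ a ∈ J, #F + #J ≤ G.degree a) :
    ∃ p : V → V, Set.InjOn p J ∧ ∀ a ∈ J, G.Adj a (p a) ∧ p a ∉ F := by
  induction J using Finset.induction_on with
  | empty => exact ⟨id, by simp, by simp⟩
  | @insert a J ha ih =>
    obtain ⟨p, hinj, hp⟩ := ih
      (fun x hx y hy => hJ x (mem_insert_of_mem hx) y (mem_insert_of_mem hy))
      (fun x hx => (Nat.add_le_add_left (card_le_card (subset_insert a J)) _).trans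
        (hdeg x (mem_insert_of_mem hx)))
    obtain ⟨b, hb⟩ : (G.neighborFinset a \ (F ∪ J.image p)).Nonempty := by
      have hdeg_a := hdeg a (mem_insert_self a J)
      have hsdiff := le_card_sdiff (F ∪ J.image p) (G.neighborFinset a)
      have hunion := card_union_le F (J.image p)
      have himage := card_image_le (s := J) (f := p)
      rw [card_insert_of_notMem ha, ← card_neighborFinset_eq_degree] at hdeg_a
      rw [← card_pos]
      omega
    simp only [mem_sdiff, mem_union, mem_image, mem_neighborFinset, not_or, not_exists,
      not_and] at hb
    refine ⟨Function.update p a b, ?_, ?_⟩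
    · intro x hx y hy hxy
      simp only [coe_insert, Set.mem_insert_iff, mem_coe] at hx hy
      grind [Set.InjOn, Function.update_apply]
    · intro x hx
      rcases mem_insert.1 hx with rfl | hx
      · rw [Function.update_self]
        exact ⟨hb.1, hb.2.1⟩
      · rw [Function.update_of_ne (ne_of_mem_of_not_mem hx ha)]
        exact hp x hx

def matchingsCovering (G : SimpleGraph V) (k : ℕ) (X : Finset V) : Set (Finset (Sym2 V)) :=
  {M | M.card = k ∧ (∀ e ∈ M, e ∈ G.edgeSet) ∧
    (∀ e ∈ M, ∀ f ∈ M, e ≠ f → ∀ w, w ∈ e → w ∉ f) ∧ ∀ u ∈ X, ∃ e ∈ M, u ∈ e}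

lemma image_mem_matchingsCovering [DecidableEq V] {J : Finset V} {p : V → V}
    (hadj : ∀ a ∈ J, G.Adj a (p a)) (hout : ∀ a ∈ J, p a ∉ J) (hinj : Set.InjOn p J) :
    J.image (fun a => s(a, p a)) ∈ G.matchingsCovering #J J := by
  have hedge : Set.InjOn (fun a => s(a, p a)) J := by
    intro a ha b hb h
    rcases Sym2.eq_iff.1 h with ⟨hab, -⟩ | ⟨hab, -⟩
    · exact hab
    · exact absurd (hab ▸ ha) (hout b hb)
  refine ⟨card_image_of_injOn hedge, ?_, ?_,
    fun a ha => ⟨_, mem_image_of_mem _ ha, Sym2.mem_mk_left _ _⟩⟩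
  · simp only [mem_image]
    rintro _ ⟨a, ha, rfl⟩
    exact hadj a ha
  · simp only [mem_image]
    rintro _ ⟨a, ha, rfl⟩ _ ⟨b, hb, rfl⟩ hne w hwa hwb
    have hab : a ≠ b := by rintro rfl; exact hne rfl
    simp only [Sym2.mem_iff] at hwa hwb
    rcases hwa with rfl | rfl <;> rcases hwb with h | h
    · exact hab h
    · exact hout b hb (h ▸ ha)
    · exact hout a ha (h ▸ hb)
    · exact hab (hinj ha hb h)

lemma image_update_mem_matchingsCovering [DecidableEq V] {I : Finset V} {v u : V} {p : V → V}
    (hvI : v ∉ I) (hinj : Set.InjOn p I) (hadj : ∀ a ∈ I, G.Adj a (p a))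
    (hout : ∀ a ∈ I, p a ∉ insert v I) (hvu : G.Adj v u) (huI : u ∉ I)
    (hpu : ∀ a ∈ I, p a ≠ u) :
    (insert v I).image (fun a => s(a, Function.update p v u a)) ∈
      G.matchingsCovering (#I + 1) (insert v I) := by
  have hupd : ∀ a ∈ I, Function.update p v u a = p a := fun a ha =>
    Function.update_of_ne (ne_of_mem_of_not_mem ha hvI) u p
  rw [← card_insert_of_notMem hvI]
  apply image_mem_matchingsCovering
  · intro a ha
    rcases mem_insert.1 ha with rfl | ha
    · simpa using hvu
    · simpa [hupd a ha] using hadj a ha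
  · intro a ha
    rcases mem_insert.1 ha with rfl | ha
    · simpa [hvu.ne'] using huI
    · simpa [hupd a ha] using hout a ha
  · rw [coe_insert, Set.injOn_insert (by simpa using hvI)]
    refine ⟨hinj.congr fun a ha => (hupd a ha).symm, ?_⟩
    rintro ⟨a, ha, hau⟩
    rw [hupd a ha, Function.update_self] at hau
    exact hpu a ha hau

lemma degree_sub_le_ncard_matchingsCovering [Fintype V] [DecidableEq V] [DecidableRel G.Adj]
    {I : Finset V} {v : V} (hvI : v ∉ I) (hind : ∀ a ∈ I, ∀ b ∈ I, ¬ G.Adj a b)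
    (hdeg : ∀ a ∈ I, #I + 1 ≤ G.degree a) :
    G.degree v - 2 * #I ≤ (G.matchingsCovering (#I + 1) (insert v I)).ncard := by
  obtain ⟨p, hinj, hp⟩ := exists_injOn_adj_notMem (F := {v}) hind
    (fun a ha => by simpa [add_comm] using hdeg a ha)
  have hpI : ∀ a ∈ I, p a ∉ I := fun a ha hpa => hind a ha _ hpa (hp a ha).1
  set U := G.neighborFinset v \ (I ∪ I.image p)
  have hU : G.degree v - 2 * #I ≤ #U := by
    have hsdiff : #(G.neighborFinset v) - #(I ∪ I.image p) ≤ #U := le_card_sdiff _ _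
    have hunion := card_union_le I (I.image p)
    have himage := card_image_le (s := I) (f := p)
    rw [card_neighborFinset_eq_degree] at hsdiff
    omega
  have hUv : ∀ u ∈ U, G.Adj v u ∧ u ∉ I ∧ ∀ a ∈ I, p a ≠ u := fun u hu => by
    simp only [U, mem_sdiff, mem_union, mem_image, mem_neighborFinset, not_or, not_exists,
      not_and] at hu
    exact hu
  let M : V → Finset (Sym2 V) := fun u =>
    (insert v I).image fun a => s(a, Function.update p v u a)
  have hM : ∀ u ∈ U, M u ∈ G.matchingsCovering (#I + 1) (insert v I) := fun u hu =>
    image_update_mem_matchingsCovering hvI hinj (fun a ha => (hp a ha).1)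
      (fun a ha => by simpa [hpI a ha] using (hp a ha).2) (hUv u hu).1 (hUv u hu).2.1
      (hUv u hu).2.2
  have hMinj : Set.InjOn M U := by
    intro u hu u' _ huu'
    have : s(v, u) ∈ M u' := huu' ▸ mem_image.2 ⟨v, mem_insert_self v I, by simp⟩
    obtain ⟨a, ha, hau⟩ := mem_image.1 this
    rcases Sym2.eq_iff.1 hau with ⟨rfl, hu'⟩ | ⟨rfl, -⟩
    · exact (by simpa using hu' : u' = u).symm
    · rcases mem_insert.1 ha with huv | huI
      · exact absurd huv (hUv _ hu).1.ne'
      · exact absurd huI (hUv _ hu).2.1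
  calc G.degree v - 2 * #I ≤ #U := hU
    _ = #(U.image M) := (card_image_of_injOn hMinj).symm
    _ ≤ _ := by
      rw [← Set.ncard_coe_finset]
      refine Set.ncard_le_ncard ?_ (Set.toFinite _)
      simpa [Set.subset_def] using hM

end SimpleGraph

end

/-- If `G` is `K_s`-saturated, `v` has degree at least `2ks`, and `I` is an independent
set of size `k - 1` avoiding `v`, then the number of matchings of size `k` in `G` whose
vertex set contains `I ∪ {v}` is at least `d_G(v) / 2`. -/
theorem stmt_12 {V : Type*} [Fintype V] [DecidableEq V] (s k : ℕ) (hk : 2 ≤ k)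
    (hks : k ≤ s - 2) (G : SimpleGraph V) [DecidableRel G.Adj] (hG : IsKSat G s)
    (v : V) (hd : 2 * k * s ≤ G.degree v)
    (I : Finset V) (hI : I.card = k - 1) (hvI : v ∉ I)
    (hind : ∀ a ∈ I, ∀ b ∈ I, ¬ G.Adj a b) :
    G.degree v ≤
      2 * Set.ncard {M : Finset (Sym2 V) | M.card = k ∧ (∀ e ∈ M, e ∈ G.edgeSet) ∧
        (∀ e ∈ M, ∀ f ∈ M, e ≠ f → ∀ w, w ∈ e → w ∉ f) ∧
        ∀ u ∈ insert v I, ∃ e ∈ M, u ∈ e} := by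
  have hs : k + 2 ≤ s := by omega
  have hcard : k + 1 ≤ Fintype.card V := by
    have := G.degree_lt_card_verts v
    nlinarith
  have hdeg : ∀ a ∈ I, #I + 1 ≤ G.degree a := fun a _ => by
    have := hG.min_le_degree a
    omega
  have key := degree_sub_le_ncard_matchingsCovering hvI hind hdeg
  rw [hI, Nat.sub_add_cancel (by omega)] at key
  change _ ≤ 2 * (G.matchingsCovering k (insert v I)).ncard
  have : 4 * k ≤ 2 * k * s := by nlinarith
  omega
end

section
/- Let s and k be integers with 3 ≤ k ≤ s−2. For every ε > 0 there exists n₀ such that for all n ≥ n₀: if G is a K_s-saturated graph on n vertices with N(M_k, G) = sat(n, M_k, K_s), then G contains a subgraph isomorphic to S_{m,s−2} for some integer m ≥ (1−ε)·n. -/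
/-!
Write `q = s - 2`. Since `S_{n,q}` is `K_s`-saturated, an extremal `G` has at most as many
`k`-matchings as `S_{n,q}`, roughly `q^k n^k / k!`. Hence `G` has `O(n)` edges and a vertex `u`
of bounded degree. By saturation every vertex `y` outside `N[u]` is joined to a `q`-clique
`Q(y) ⊆ N(u)`, and the matchings pairing such vertices `y` with vertices of `Q(y)` already almost
reach the count of `S_{n,q}`. Only boundedly many cliques `Q(y)` occur. If two of them,
`Q₁ ≠ Q₂`, were each shared by many `y`, then a matching through a vertex of `Q₁ \ Q₂` leaves
every `y` with `Q(y) = Q₂` one extra partner; this pushes the count past the upper bound by order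
`n^(k-1)`. So all but `O(1)` vertices share one clique `Q`, and `Q` together with them spans a
copy of `S_{m,q}` with `m ≥ n - O(1)`.
-/

open Finset
open scoped Nat

theorem Nat.descFactorial_succ_le_add {a b : ℕ} (hba : b ≤ a) (c : ℕ) :
    a.descFactorial (c + 1) ≤ b.descFactorial (c + 1) + (c + 1) * (a - b) * a ^ c := by
  induction c with
  | zero => simp; omega
  | succ c ih =>
    rw [Nat.descFactorial_succ a, Nat.descFactorial_succ b]
    have hb : b.descFactorial (c + 1) ≤ a ^ (c + 1) :=
      (Nat.descFactorial_le_pow _ _).trans (Nat.pow_le_pow_left hba _)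
    calc (a - (c + 1)) * a.descFactorial (c + 1)
        ≤ (a - (c + 1)) * (b.descFactorial (c + 1) + (c + 1) * (a - b) * a ^ c) :=
          Nat.mul_le_mul_left _ ih
      _ ≤ (b - (c + 1) + (a - b)) * b.descFactorial (c + 1)
          + a * ((c + 1) * (a - b) * a ^ c) := by
          rw [mul_add]
          exact add_le_add (Nat.mul_le_mul_right _ (by omega)) (Nat.mul_le_mul_right _ (by omega))
      _ ≤ (b - (c + 1)) * b.descFactorial (c + 1) + (a - b) * a ^ (c + 1)
          + a * ((c + 1) * (a - b) * a ^ c) := by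
          rw [add_mul]
          gcongr
      _ = (b - (c + 1)) * b.descFactorial (c + 1) + (c + 1 + 1) * (a - b) * a ^ (c + 1) := by
          ring

theorem le_of_descFactorial_mul_le {n a b r c P t : ℕ} (hn : 0 < n)
    (hna : n ≤ 2 * (P * (a + 1 - t))) (hr : 0 < r) (h : a.descFactorial t * r * b ≤ c * n ^ t) :
    b ≤ c * (2 * P) ^ t := by
  have hX : (a + 1 - t) ^ t ≤ a.descFactorial t * r :=
    (Nat.pow_sub_le_descFactorial a t).trans (Nat.le_mul_of_pos_right _ hr)
  have hpos : 0 < a.descFactorial t * r :=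
    (pow_pos (Nat.pos_of_ne_zero fun h0 => by simp [h0] at hna; omega) t).trans_le hX
  refine Nat.le_of_mul_le_mul_left ?_ hpos
  calc a.descFactorial t * r * b ≤ c * n ^ t := h
    _ ≤ c * ((2 * P) ^ t * (a + 1 - t) ^ t) := by
        rw [← mul_pow, mul_assoc]
        gcongr
    _ ≤ c * ((2 * P) ^ t * (a.descFactorial t * r)) := by gcongr
    _ = a.descFactorial t * r * (c * (2 * P) ^ t) := by ring

section Fibers

variable {α β : Type*} [DecidableEq β] {s : Finset α} {f : α → β}

theorem exists_card_le_mul_card_fiber (hs : s.Nonempty) :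
    ∃ b ∈ s.image f, #s ≤ #(s.image f) * #{a ∈ s | f a = b} := by
  obtain ⟨b, hb, hmax⟩ := (s.image f).exists_max_image (fun b => #{a ∈ s | f a = b})
    (hs.image f)
  refine ⟨b, hb, ?_⟩
  rw [card_eq_sum_card_image f s]
  simpa using sum_le_card_nsmul _ _ _ hmax

theorem card_le_card_fiber_add {b : β} {C : ℕ} (hb : b ∈ s.image f)
    (hC : ∀ b' ∈ s.image f, b' ≠ b → #{a ∈ s | f a = b'} ≤ C) :
    #s ≤ #{a ∈ s | f a = b} + #(s.image f) * C := by
  rw [card_eq_sum_card_image f s, ← add_sum_erase _ _ hb]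
  gcongr
  calc _ ≤ #((s.image f).erase b) * C := by
        simpa using sum_le_card_nsmul _ _ _ fun b' hb' => hC b' (mem_of_mem_erase hb')
          (ne_of_mem_erase hb')
    _ ≤ #(s.image f) * C := Nat.mul_le_mul_right _ (card_erase_le)

end Fibers

theorem card_bipartiteBelow_subset_le {α : Type*} [DecidableEq α] {F : Finset (Finset α)}
    {j : ℕ} (hF : ∀ A ∈ F, #A = j) {M : Finset α} (hM : #M = j + 1) :
    #(F.bipartiteBelow (· ⊆ ·) M) ≤ j + 1 := by
  calc _ ≤ #(M.powersetCard j) := card_le_card fun A hA => by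
        rw [mem_bipartiteBelow] at hA
        exact mem_powersetCard.2 ⟨hA.2, hF A hA.1⟩
    _ = j + 1 := by rw [card_powersetCard, hM, Nat.choose_succ_self_right]

theorem Sym2.inf_mem {α : Type*} [LinearOrder α] (e : Sym2 α) : e.inf ∈ e := by
  induction e using Sym2.ind with
  | _ a b => rcases le_total a b with h | h <;> simp [h]

theorem Sym2.sup_mem {α : Type*} [LinearOrder α] (e : Sym2 α) : e.sup ∈ e := by
  induction e using Sym2.ind with
  | _ a b => rcases le_total a b with h | h <;> simp [h]

section PairMatching

variable {V : Type*}

/-- Matchings of the bipartite graph joining each `y ∈ Y` to `N y`, each edge stored as `(y, x)`. -/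
def IsPairMatching (Y : Finset V) (N : V → Finset V) (A : Finset (V × V)) : Prop :=
  (∀ p ∈ A, p.1 ∈ Y ∧ p.2 ∈ N p.1) ∧ Set.InjOn Prod.fst (A : Set (V × V)) ∧
    Set.InjOn Prod.snd (A : Set (V × V))

variable {Y Y' : Finset V} {N : V → Finset V} {A B : Finset (V × V)}

theorem IsPairMatching.subset (hA : IsPairMatching Y N A) (hB : B ⊆ A) : IsPairMatching Y N B :=
  ⟨fun p hp => hA.1 p (hB hp), hA.2.1.mono (coe_subset.2 hB), hA.2.2.mono (coe_subset.2 hB)⟩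

theorem IsPairMatching.mono (hA : IsPairMatching Y N A) (hY : Y ⊆ Y') : IsPairMatching Y' N A :=
  ⟨fun p hp => ⟨hY (hA.1 p hp).1, (hA.1 p hp).2⟩, hA.2⟩

theorem IsPairMatching.insert [DecidableEq V] (hA : IsPairMatching Y N A) {y x : V}
    (hy : y ∈ Y \ A.image Prod.fst) (hx : x ∈ N y \ A.image Prod.snd) :
    IsPairMatching Y N (insert (y, x) A) := by
  simp only [mem_sdiff, mem_image, not_exists, not_and] at hy hx
  refine ⟨?_, ?_, ?_⟩
  · simp only [mem_insert, forall_eq_or_imp]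
    exact ⟨⟨hy.1, hx.1⟩, hA.1⟩
  · rw [coe_insert, Set.injOn_insert fun h => hy.2 _ h rfl]
    exact ⟨hA.2.1, fun ⟨p, hp, hpy⟩ => hy.2 p hp hpy⟩
  · rw [coe_insert, Set.injOn_insert fun h => hy.2 _ h rfl]
    exact ⟨hA.2.2, fun ⟨p, hp, hpx⟩ => hx.2 p hp hpx⟩

variable [Fintype V]

noncomputable def pairMatchings (Y : Finset V) (N : V → Finset V) (j : ℕ) :
    Finset (Finset (V × V)) := by
  classical exact {A | #A = j ∧ IsPairMatching Y N A}

theorem mem_pairMatchings {j : ℕ} :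
    A ∈ pairMatchings Y N j ↔ #A = j ∧ IsPairMatching Y N A := by
  simp [pairMatchings]

end PairMatching

section Extensions

variable {V : Type*} [DecidableEq V] {Y : Finset V} {N : V → Finset V} {A : Finset (V × V)}

def numExtensions (Y : Finset V) (N : V → Finset V) (A : Finset (V × V)) : ℕ :=
  ∑ y ∈ Y \ A.image Prod.fst, #(N y \ A.image Prod.snd)

theorem numExtensions_le_card_bipartiteAbove {F' : Finset (Finset (V × V))}
    (hins : ∀ y ∈ Y \ A.image Prod.fst, ∀ x ∈ N y \ A.image Prod.snd, insert (y, x) A ∈ F') :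
    numExtensions Y N A ≤ #(F'.bipartiteAbove (· ⊆ ·) A) := by
  rw [numExtensions, ← card_sigma]
  refine card_le_card_of_injOn (fun p => insert (p.1, p.2) A) (fun p hp => ?_)
    fun p hp p' _ h => ?_
  · rw [mem_coe, mem_sigma] at hp
    exact (mem_bipartiteAbove _).2 ⟨hins _ hp.1 _ hp.2, subset_insert _ _⟩
  · have hpA : (p.1, p.2) ∉ A := fun h' =>
      (mem_sdiff.1 (mem_sigma.1 hp).1).2 (mem_image_of_mem _ h')
    obtain ⟨h1, h2⟩ := Prod.ext_iff.1 ((insert_inj hpA).1 h)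
    exact Sigma.ext h1 (heq_of_eq h2)

variable [Fintype V]

theorem sum_numExtensions_le {F F' : Finset (Finset (V × V))} {j : ℕ}
    (hF : F ⊆ pairMatchings Y N j) (hF' : ∀ M ∈ F', #M = j + 1)
    (hins : ∀ A ∈ F, ∀ y ∈ Y \ A.image Prod.fst, ∀ x ∈ N y \ A.image Prod.snd,
      insert (y, x) A ∈ F') :
    ∑ A ∈ F, numExtensions Y N A ≤ #F' * (j + 1) := by
  calc ∑ A ∈ F, numExtensions Y N A ≤ ∑ A ∈ F, #(F'.bipartiteAbove (· ⊆ ·) A) :=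
        sum_le_sum fun A hA => numExtensions_le_card_bipartiteAbove (hins A hA)
    _ = ∑ M ∈ F', #(F.bipartiteBelow (· ⊆ ·) M) :=
        sum_card_bipartiteAbove_eq_sum_card_bipartiteBelow _
    _ ≤ ∑ _M ∈ F', (j + 1) := sum_le_sum fun M hM =>
        card_bipartiteBelow_subset_le (fun A hA => (mem_pairMatchings.1 (hF hA)).1) (hF' M hM)
    _ = #F' * (j + 1) := by rw [sum_const, smul_eq_mul]

theorem le_numExtensions {q t : ℕ} {Y₂ : Finset V} (hN : ∀ y ∈ Y, q ≤ #(N y))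
    (hA : A ∈ pairMatchings Y N t) (htq : t ≤ q) (hY₂ : Y₂ ⊆ Y \ A.image Prod.fst)
    (hY₂N : ∀ y ∈ Y₂, #(N y ∩ A.image Prod.snd) < t) :
    (#Y - t) * (q - t) + #Y₂ ≤ numExtensions Y N A := by
  obtain ⟨hcard, hA⟩ := mem_pairMatchings.1 hA
  have hsnd : #(A.image Prod.snd) = t := (card_image_of_injOn hA.2.2).trans hcard
  have hfst : A.image Prod.fst ⊆ Y := image_subset_iff.2 fun p hp => (hA.1 p hp).1
  have hterm : ∀ y ∈ Y \ A.image Prod.fst,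
      (q - t) + (if y ∈ Y₂ then 1 else 0) ≤ #(N y \ A.image Prod.snd) := by
    intro y hy
    have h1 := card_sdiff_add_card_inter (N y) (A.image Prod.snd)
    have h2 := hN y (mem_sdiff.1 hy).1
    have h3 : #(N y ∩ A.image Prod.snd) ≤ t := hsnd ▸ card_le_card inter_subset_right
    split_ifs with h
    · have := hY₂N y h
      omega
    · omega
  calc (#Y - t) * (q - t) + #Y₂
      = ∑ y ∈ Y \ A.image Prod.fst, ((q - t) + if y ∈ Y₂ then 1 else 0) := by
        rw [sum_add_distrib, sum_const, sum_boole, filter_mem_eq_inter, inter_eq_right.2 hY₂,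
          card_sdiff_of_subset hfst, (card_image_of_injOn hA.2.1).trans hcard, smul_eq_mul,
          Nat.cast_id]
    _ ≤ numExtensions Y N A := sum_le_sum hterm

end Extensions

section Counting

variable {V : Type*} [DecidableEq V] [Fintype V] {Y : Finset V} {N : V → Finset V}
  {A : Finset (V × V)} {q : ℕ}

theorem insert_mem_pairMatchings {j : ℕ} (hA : A ∈ pairMatchings Y N j) {y x : V}
    (hy : y ∈ Y \ A.image Prod.fst) (hx : x ∈ N y \ A.image Prod.snd) :
    insert (y, x) A ∈ pairMatchings Y N (j + 1) := by
  obtain ⟨hcard, hA⟩ := mem_pairMatchings.1 hA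
  have hyx : (y, x) ∉ A := fun h => (mem_sdiff.1 hy).2 (mem_image_of_mem _ h)
  exact mem_pairMatchings.2 ⟨by rw [card_insert_of_notMem hyx, hcard], hA.insert hy hx⟩

theorem card_mul_le_card_mul_succ {F F' : Finset (Finset (V × V))} {j : ℕ}
    (hN : ∀ y ∈ Y, q ≤ #(N y)) (hjq : j ≤ q) (hF : F ⊆ pairMatchings Y N j)
    (hF' : F' ⊆ pairMatchings Y N (j + 1))
    (hins : ∀ A ∈ F, ∀ y ∈ Y \ A.image Prod.fst, ∀ x ∈ N y \ A.image Prod.snd,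
      insert (y, x) A ∈ F') :
    #F * ((#Y - j) * (q - j)) ≤ #F' * (j + 1) := by
  calc #F * ((#Y - j) * (q - j)) = ∑ _A ∈ F, (#Y - j) * (q - j) := by
        rw [sum_const, smul_eq_mul]
    _ ≤ ∑ A ∈ F, numExtensions Y N A := sum_le_sum fun A hA => by
        simpa using le_numExtensions (Y₂ := ∅) hN (hF hA) hjq (empty_subset _) (by simp)
    _ ≤ #F' * (j + 1) :=
        sum_numExtensions_le hF (fun M hM => (mem_pairMatchings.1 (hF' hM)).1) hins

theorem descFactorial_mul_descFactorial_le_card_pairMatchings (hN : ∀ y ∈ Y, q ≤ #(N y))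
    (j : ℕ) : (#Y).descFactorial j * q.descFactorial j ≤ #(pairMatchings Y N j) * j ! := by
  induction j with
  | zero =>
    have : ∅ ∈ pairMatchings Y N 0 := mem_pairMatchings.2 ⟨rfl, by simp [IsPairMatching]⟩
    simpa using card_pos.2 ⟨∅, this⟩
  | succ j ih =>
    rcases lt_or_ge q (j + 1) with hq | hq
    · rw [Nat.descFactorial_eq_zero_iff_lt.2 hq, mul_zero]
      exact Nat.zero_le _
    have step := card_mul_le_card_mul_succ (j := j) hN (by omega) subset_rfl subset_rfl
      fun A hA y hy x hx => insert_mem_pairMatchings hA hy hx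
    rw [Nat.descFactorial_succ, Nat.descFactorial_succ, Nat.factorial_succ]
    calc (#Y - j) * (#Y).descFactorial j * ((q - j) * q.descFactorial j)
        = (#Y).descFactorial j * q.descFactorial j * ((#Y - j) * (q - j)) := by ring
      _ ≤ #(pairMatchings Y N j) * j ! * ((#Y - j) * (q - j)) := Nat.mul_le_mul_right _ ih
      _ = #(pairMatchings Y N j) * ((#Y - j) * (q - j)) * j ! := by ring
      _ ≤ #(pairMatchings Y N (j + 1)) * (j + 1) * j ! := Nat.mul_le_mul_right _ step
      _ = _ := by ring

noncomputable def pairMatchingsThrough (Y : Finset V) (N : V → Finset V) (x : V) (j : ℕ) :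
    Finset (Finset (V × V)) :=
  (pairMatchings Y N j).filter fun A => x ∈ A.image Prod.snd

theorem descFactorial_mul_descFactorial_le_card_pairMatchingsThrough {x : V}
    (hN : ∀ y ∈ Y, q ≤ #(N y)) (hx : ∀ y ∈ Y, x ∈ N y) {j : ℕ} (hj : 1 ≤ j) :
    (#Y).descFactorial j * (q - 1).descFactorial (j - 1)
      ≤ #(pairMatchingsThrough Y N x j) * j ! := by
  induction j, hj using Nat.le_induction with
  | base =>
    simp only [Nat.descFactorial_one, Nat.sub_self, Nat.descFactorial_zero, mul_one,
      Nat.factorial_one]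
    refine card_le_card_of_injOn (fun y => {(y, x)}) (fun y hy => ?_) fun y _ y' _ h => ?_
    · refine mem_filter.2 ⟨mem_pairMatchings.2 ⟨card_singleton _, ?_, by simp, by simp⟩, by simp⟩
      simpa using ⟨hy, hx y hy⟩
    · simpa using h
  | succ j hj ih =>
    rcases lt_or_ge (q - 1) j with hq | hq
    · rw [Nat.add_sub_cancel, Nat.descFactorial_eq_zero_iff_lt.2 hq, mul_zero]
      exact Nat.zero_le _
    have step := card_mul_le_card_mul_succ (F := pairMatchingsThrough Y N x j)
      (F' := pairMatchingsThrough Y N x (j + 1)) hN (by omega) (filter_subset _ _)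
      (filter_subset _ _) fun A hA y hy x' hx' => by
        refine mem_filter.2 ⟨insert_mem_pairMatchings (mem_filter.1 hA).1 hy hx', ?_⟩
        rw [image_insert]
        exact mem_insert_of_mem (mem_filter.1 hA).2
    obtain ⟨i, rfl⟩ : ∃ i, j = i + 1 := ⟨j - 1, by omega⟩
    rw [Nat.add_sub_cancel, Nat.descFactorial_succ, Nat.descFactorial_succ, Nat.factorial_succ]
    rw [Nat.add_sub_cancel] at ih
    calc (#Y - (i + 1)) * (#Y).descFactorial (i + 1) * ((q - 1 - i) * (q - 1).descFactorial i)
        = (#Y).descFactorial (i + 1) * (q - 1).descFactorial i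
          * ((#Y - (i + 1)) * (q - (i + 1))) := by
          rw [show q - 1 - i = q - (i + 1) by omega]
          ring
      _ ≤ #(pairMatchingsThrough Y N x (i + 1)) * (i + 1)! * ((#Y - (i + 1)) * (q - (i + 1))) :=
          Nat.mul_le_mul_right _ ih
      _ = #(pairMatchingsThrough Y N x (i + 1)) * ((#Y - (i + 1)) * (q - (i + 1))) * (i + 1)! := by
          ring
      _ ≤ #(pairMatchingsThrough Y N x (i + 1 + 1)) * (i + 1 + 1) * (i + 1)! :=
          Nat.mul_le_mul_right _ step
      _ = _ := by ring

end Counting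

section Surplus

variable {V : Type*} [DecidableEq V] [Fintype V] {Y Y₁ Y₂ : Finset V} {N : V → Finset V}
  {q t : ℕ} {x : V}

theorem card_mul_add_card_mul_le_card_pairMatchings_succ (hN : ∀ y ∈ Y, q ≤ #(N y))
    (ht : 1 ≤ t) (htq : t ≤ q) (hY₁ : Y₁ ⊆ Y) (hY₂ : Y₂ ⊆ Y) (hY₁₂ : Disjoint Y₁ Y₂)
    (hx : ∀ y ∈ Y₂, x ∉ N y) :
    #(pairMatchings Y N t) * ((#Y - t) * (q - t)) + #(pairMatchingsThrough Y₁ N x t) * #Y₂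
      ≤ #(pairMatchings Y N (t + 1)) * (t + 1) := by
  set P := pairMatchings Y N t
  set T := pairMatchingsThrough Y₁ N x t
  have hTP : T ⊆ P := fun A hA => by
    obtain ⟨hcard, hA⟩ := mem_pairMatchings.1 (mem_filter.1 hA).1
    exact mem_pairMatchings.2 ⟨hcard, hA.mono hY₁⟩
  -- A pair matching through `x` occupies at most `t - 1` vertices of `N y` for `y ∈ Y₂`, since
  -- `x ∉ N y`: each such `y` has one extension more than the generic count.
  have hext : ∀ A ∈ P,
      (#Y - t) * (q - t) + (if A ∈ T then #Y₂ else 0) ≤ numExtensions Y N A := by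
    intro A hA
    split_ifs with hAT
    · obtain ⟨hA₁, hxA⟩ := mem_filter.1 hAT
      obtain ⟨hcard, hA₁⟩ := mem_pairMatchings.1 hA₁
      refine le_numExtensions hN hA htq ?_ fun y hy => ?_
      · have : A.image Prod.fst ⊆ Y₁ := image_subset_iff.2 fun p hp => (hA₁.1 p hp).1
        exact subset_sdiff.2 ⟨hY₂, (hY₁₂.mono_left this).symm⟩
      · calc #(N y ∩ A.image Prod.snd) ≤ #((A.image Prod.snd).erase x) :=
            card_le_card fun z hz => mem_erase.2
              ⟨fun h => hx y hy (h ▸ (mem_inter.1 hz).1), (mem_inter.1 hz).2⟩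
          _ < t := by rw [card_erase_of_mem hxA, card_image_of_injOn hA₁.2.2, hcard]; omega
    · simpa using le_numExtensions (Y₂ := ∅) hN hA htq (empty_subset _) (by simp)
  calc _ = ∑ A ∈ P, ((#Y - t) * (q - t) + if A ∈ T then #Y₂ else 0) := by
        rw [sum_add_distrib, sum_const, sum_ite_mem, inter_eq_right.2 hTP, sum_const,
          smul_eq_mul, smul_eq_mul]
    _ ≤ ∑ A ∈ P, numExtensions Y N A := sum_le_sum hext
    _ ≤ _ := sum_numExtensions_le subset_rfl (fun M hM => (mem_pairMatchings.1 hM).1)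
        fun A hA y hy x hx => insert_mem_pairMatchings hA hy hx

theorem descFactorial_mul_descFactorial_add_le_card_pairMatchings (hN : ∀ y ∈ Y, q ≤ #(N y))
    (ht : 1 ≤ t) (htq : t ≤ q) (hY₁ : Y₁ ⊆ Y) (hY₂ : Y₂ ⊆ Y) (hY₁₂ : Disjoint Y₁ Y₂)
    (hx₁ : ∀ y ∈ Y₁, x ∈ N y) (hx₂ : ∀ y ∈ Y₂, x ∉ N y) :
    (#Y).descFactorial (t + 1) * q.descFactorial (t + 1)
        + (#Y₁).descFactorial t * (q - 1).descFactorial (t - 1) * #Y₂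
      ≤ #(pairMatchings Y N (t + 1)) * (t + 1)! := by
  have hP := descFactorial_mul_descFactorial_le_card_pairMatchings hN t
  have hT := descFactorial_mul_descFactorial_le_card_pairMatchingsThrough
    (fun y hy => hN y (hY₁ hy)) hx₁ ht
  have step := card_mul_add_card_mul_le_card_pairMatchings_succ hN ht htq hY₁ hY₂ hY₁₂ hx₂
  rw [Nat.descFactorial_succ, Nat.descFactorial_succ, Nat.factorial_succ]
  calc (#Y - t) * (#Y).descFactorial t * ((q - t) * q.descFactorial t)
        + (#Y₁).descFactorial t * (q - 1).descFactorial (t - 1) * #Y₂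
      = (#Y).descFactorial t * q.descFactorial t * ((#Y - t) * (q - t))
        + (#Y₁).descFactorial t * (q - 1).descFactorial (t - 1) * #Y₂ := by ring
    _ ≤ #(pairMatchings Y N t) * t ! * ((#Y - t) * (q - t))
        + #(pairMatchingsThrough Y₁ N x t) * t ! * #Y₂ := by gcongr
    _ = (#(pairMatchings Y N t) * ((#Y - t) * (q - t))
        + #(pairMatchingsThrough Y₁ N x t) * #Y₂) * t ! := by ring
    _ ≤ #(pairMatchings Y N (t + 1)) * (t + 1) * t ! := Nat.mul_le_mul_right _ step
    _ = _ := by ring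

end Surplus

section Upper

variable {V : Type*} [DecidableEq V] [Fintype V] {Y : Finset V} {N : V → Finset V}

theorem card_pairMatchings_succ_mul_le (j : ℕ) :
    #(pairMatchings Y N (j + 1)) * (j + 1)
      ≤ #(pairMatchings Y N j) * ((#Y - j) * (Fintype.card V - j)) := by
  refine card_mul_le_card_mul' (· ⊆ ·) (fun M hM => ?_) fun A hA => ?_
  · obtain ⟨hcard, hM⟩ := mem_pairMatchings.1 hM
    calc j + 1 = #(M.powersetCard j) := by
          rw [card_powersetCard, hcard, Nat.choose_succ_self_right]
      _ ≤ _ := card_le_card fun A hA => by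
          obtain ⟨hAM, hAcard⟩ := mem_powersetCard.1 hA
          exact (mem_bipartiteBelow _).2 ⟨mem_pairMatchings.2 ⟨hAcard, hM.subset hAM⟩, hAM⟩
  · obtain ⟨hcard, hA⟩ := mem_pairMatchings.1 hA
    have hfst : A.image Prod.fst ⊆ Y := image_subset_iff.2 fun p hp => (hA.1 p hp).1
    calc _ ≤ #(((Y \ A.image Prod.fst) ×ˢ (univ \ A.image Prod.snd)).image (insert · A)) := by
          refine card_le_card fun M hM => ?_
          obtain ⟨hM, hAM⟩ := (mem_bipartiteAbove _).1 hM
          obtain ⟨hMcard, hM⟩ := mem_pairMatchings.1 hM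
          obtain ⟨p, hpA, rfl⟩ := exists_eq_insert_iff.2 ⟨hAM, by omega⟩
          have hp := mem_insert_self p A
          have hnew : ∀ a ∈ A, a.1 ≠ p.1 ∧ a.2 ≠ p.2 := fun a ha =>
            have hap : a ≠ p := fun h => hpA (h ▸ ha)
            ⟨fun h => hap (hM.2.1 (mem_insert_of_mem ha) hp h),
              fun h => hap (hM.2.2 (mem_insert_of_mem ha) hp h)⟩
          refine mem_image.2 ⟨p, mem_product.2 ⟨mem_sdiff.2 ⟨(hM.1 p hp).1, fun h => ?_⟩,
            mem_sdiff.2 ⟨mem_univ _, fun h => ?_⟩⟩, rfl⟩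
          · obtain ⟨a, ha, hap⟩ := mem_image.1 h
            exact (hnew a ha).1 hap
          · obtain ⟨a, ha, hap⟩ := mem_image.1 h
            exact (hnew a ha).2 hap
      _ ≤ #((Y \ A.image Prod.fst) ×ˢ (univ \ A.image Prod.snd)) := card_image_le
      _ = (#Y - j) * (Fintype.card V - j) := by
          rw [card_product, card_sdiff_of_subset hfst, card_sdiff_of_subset (subset_univ _),
            card_univ, card_image_of_injOn hA.2.1, card_image_of_injOn hA.2.2, hcard]

theorem card_pairMatchings_mul_factorial_le (j : ℕ) :
    #(pairMatchings Y N j) * j ! ≤ (#Y).descFactorial j * (Fintype.card V).descFactorial j := by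
  induction j with
  | zero =>
    simpa using card_le_one.2 fun A hA B hB => by
      rw [card_eq_zero.1 (mem_pairMatchings.1 hA).1, card_eq_zero.1 (mem_pairMatchings.1 hB).1]
  | succ j ih =>
    rw [Nat.descFactorial_succ, Nat.descFactorial_succ, Nat.factorial_succ]
    calc #(pairMatchings Y N (j + 1)) * ((j + 1) * j !)
        = #(pairMatchings Y N (j + 1)) * (j + 1) * j ! := by ring
      _ ≤ #(pairMatchings Y N j) * ((#Y - j) * (Fintype.card V - j)) * j ! :=
          Nat.mul_le_mul_right _ (card_pairMatchings_succ_mul_le j)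
      _ = #(pairMatchings Y N j) * j ! * ((#Y - j) * (Fintype.card V - j)) := by ring
      _ ≤ (#Y).descFactorial j * (Fintype.card V).descFactorial j
          * ((#Y - j) * (Fintype.card V - j)) := Nat.mul_le_mul_right _ ih
      _ = _ := by ring

end Upper

section Matchings

variable {V : Type*} [Fintype V] (G : SimpleGraph V)

def IsEdgeMatching (M : Finset (Sym2 V)) : Prop :=
  (∀ e ∈ M, e ∈ G.edgeSet) ∧ ∀ e ∈ M, ∀ f ∈ M, e ≠ f → ∀ v, v ∈ e → v ∉ f

noncomputable def matchingFinset (k : ℕ) : Finset (Finset (Sym2 V)) := by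
  classical exact {M | #M = k ∧ IsEdgeMatching G M}

variable {G}

theorem mem_matchingFinset {k : ℕ} {M : Finset (Sym2 V)} :
    M ∈ matchingFinset G k ↔ #M = k ∧ IsEdgeMatching G M := by
  simp [matchingFinset]

theorem numMatchings_eq_card (k : ℕ) : numMatchings G k = #(matchingFinset G k) := by
  rw [numMatchings, ← Set.ncard_coe_finset]
  congr 1
  ext M
  simp [mem_matchingFinset, IsEdgeMatching]

theorem card_pairMatchings_le_numMatchings [DecidableEq V] {Y : Finset V} {N : V → Finset V}
    {k : ℕ}
    (hN : ∀ y ∈ Y, ∀ x ∈ N y, G.Adj y x ∧ x ∉ Y) :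
    #(pairMatchings Y N k) ≤ numMatchings G k := by
  set S : Set (V × V) := {p | p.1 ∈ Y ∧ p.2 ∉ Y}
  have hS : Set.InjOn (fun p : V × V => s(p.1, p.2)) S := by
    rintro p ⟨hp₁, hp₂⟩ p' ⟨hp₁', -⟩ h
    rcases Sym2.mk_eq_mk_iff.1 h with h | rfl
    · exact h
    · exact absurd hp₁' hp₂
  have hAS : ∀ A ∈ pairMatchings Y N k, (A : Set (V × V)) ⊆ S := fun A hA p hp =>
    have h := (mem_pairMatchings.1 hA).2.1 p hp
    ⟨h.1, (hN _ h.1 _ h.2).2⟩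
  rw [numMatchings_eq_card]
  refine card_le_card_of_injOn (fun A => A.image fun p => s(p.1, p.2)) (fun A hA => ?_)
    fun A hA B hB h => ?_
  · have hA' := hAS A hA
    obtain ⟨hcard, hAY, hA₁, hA₂⟩ := mem_pairMatchings.1 hA
    refine mem_matchingFinset.2 ⟨(card_image_of_injOn (hS.mono hA')).trans hcard, ?_, ?_⟩
    · simp only [mem_image]
      rintro _ ⟨p, hp, rfl⟩
      exact (hN _ (hAY p hp).1 _ (hAY p hp).2).1
    · simp only [mem_image]
      rintro _ ⟨p, hp, rfl⟩ _ ⟨p', hp', rfl⟩ hne v hv hv'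
      have hpp' : p ≠ p' := fun h => hne (h ▸ rfl)
      obtain ⟨hp₁, hp₂⟩ := hA' hp
      obtain ⟨hp₁', hp₂'⟩ := hA' hp'
      rw [Sym2.mem_iff] at hv hv'
      rcases hv with rfl | rfl <;> rcases hv' with h | h
      · exact hpp' (hA₁ hp hp' h)
      · exact hp₂' (h ▸ hp₁)
      · exact hp₂ (h ▸ hp₁')
      · exact hpp' (hA₂ hp hp' h)
  · rw [← coe_inj, ← hS.image_eq_image_iff (hAS A hA) (hAS B hB), ← coe_image, ← coe_image]
    exact congrArg _ h

end Matchings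

section SGraph

theorem sGraph_inf_lt {n q : ℕ} {e : Sym2 (Fin n)} (he : e ∈ (sGraph n q).edgeSet) :
    (e.inf : ℕ) < q := by
  induction e using Sym2.ind with
  | _ a b =>
    simp only [SimpleGraph.mem_edgeSet, sGraph, Sym2.inf_mk] at he ⊢
    rcases le_total a b with h | h
    · rw [inf_eq_left.2 h]; have : (a : ℕ) ≤ b := h; omega
    · rw [inf_eq_right.2 h]; have : (b : ℕ) ≤ a := h; omega

theorem numMatchings_sGraph_mul_factorial_le (n q k : ℕ) :
    numMatchings (sGraph n q) k * k ! ≤ q.descFactorial k * n.descFactorial k := by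
  set W : Finset (Fin n) := {v | (v : ℕ) < q}
  have hinj : Function.Injective fun e : Sym2 (Fin n) => (e.inf, e.sup) := fun e e' h =>
    Sym2.inf_eq_inf_and_sup_eq_sup.1 (Prod.ext_iff.1 h)
  -- Orient every edge from its smaller endpoint, which lies in the clique part `W`.
  have hle : numMatchings (sGraph n q) k ≤ #(pairMatchings W (fun _ => univ) k) := by
    rw [numMatchings_eq_card]
    refine card_le_card_of_injOn (fun M => M.image fun e => (e.inf, e.sup)) (fun M hM => ?_)
      (image_injective hinj).injOn
    obtain ⟨hcard, hedge, hdisj⟩ := mem_matchingFinset.1 hM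
    refine mem_pairMatchings.2 ⟨(card_image_of_injective _ hinj).trans hcard, ?_, ?_, ?_⟩ <;>
      simp only [coe_image, Set.InjOn, Set.forall_mem_image, mem_coe, mem_image]
    · rintro _ ⟨e, he, rfl⟩
      simpa [W] using sGraph_inf_lt (hedge e he)
    · intro e he e' he' h
      by_contra hne
      exact hdisj e he e' he' (fun h' => hne (h' ▸ rfl)) _ (Sym2.inf_mem e) (h ▸ Sym2.inf_mem e')
    · intro e he e' he' h
      by_contra hne
      exact hdisj e he e' he' (fun h' => hne (h' ▸ rfl)) _ (Sym2.sup_mem e) (h ▸ Sym2.sup_mem e')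
  have hW : #W ≤ q := Fin.card_filter_val_lt.trans_le (min_le_right _ _)
  calc numMatchings (sGraph n q) k * k ! ≤ #(pairMatchings W (fun _ => univ) k) * k ! :=
        Nat.mul_le_mul_right _ hle
    _ ≤ (#W).descFactorial k * (Fintype.card (Fin n)).descFactorial k :=
        card_pairMatchings_mul_factorial_le k
    _ ≤ q.descFactorial k * n.descFactorial k := by
        rw [Fintype.card_fin]
        exact Nat.mul_le_mul_right _ (Nat.descFactorial_le _ hW)

theorem sGraph_isKSat {n q : ℕ} (hqn : q + 2 ≤ n) : IsKSat (sGraph n q) (q + 2) := by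
  refine ⟨fun t ht => ?_, fun u v huv hnadj => ?_⟩
  · have : #t ≤ #(range (q + 1)) := by
      refine card_le_card_of_injOn (fun v => min (v : ℕ) q) (fun v _ => by simp)
        fun a ha b hb hab => ?_
      by_contra hne
      have := (ht.1 ha hb hne).2
      simp only at hab
      omega
    rw [ht.2, card_range] at this
    omega
  · have hu : q ≤ (u : ℕ) := not_lt.1 fun h => hnadj ⟨huv, Or.inl h⟩
    have hv : q ≤ (v : ℕ) := not_lt.1 fun h => hnadj ⟨huv, Or.inr h⟩
    set W : Finset (Fin n) := {w | (w : ℕ) < q}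
    have hWuv : Disjoint W {u, v} := by
      simp only [W, disjoint_left, mem_filter, mem_univ, true_and, mem_insert, mem_singleton]
      omega
    refine fun h => h (W ∪ {u, v}) ⟨fun a ha b hb hab => ?_, ?_⟩
    · simp only [W, coe_union, coe_filter, mem_univ, true_and, coe_insert, coe_singleton,
        Set.mem_union, Set.mem_ofPred_eq, Set.mem_insert_iff, Set.mem_singleton_iff] at ha hb
      simp only [SimpleGraph.sup_adj, SimpleGraph.fromEdgeSet_adj, Set.mem_singleton_iff, sGraph]
      rcases ha with ha | rfl | rfl <;> rcases hb with hb | rfl | rfl <;>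
        simp_all [Sym2.eq_swap]
    · rw [card_union_of_disjoint hWuv, card_pair huv, Fin.card_filter_val_lt]
      omega

end SGraph

section ManyEdges

open SimpleGraph

variable {V : Type*} [Fintype V] [DecidableEq V] {G : SimpleGraph V} [DecidableRel G.Adj]

theorem card_matchingFinset_mul_le (j : ℕ) :
    #(matchingFinset G j) * (#G.edgeFinset - 2 * j * Fintype.card V)
      ≤ #(matchingFinset G (j + 1)) * (j + 1) := by
  refine card_mul_le_card_mul (· ⊆ ·) (fun M hM => ?_) fun M hM =>
    card_bipartiteBelow_subset_le (fun A hA => (mem_matchingFinset.1 hA).1)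
      (mem_matchingFinset.1 hM).1
  obtain ⟨hcard, hedge, hdisj⟩ := mem_matchingFinset.1 hM
  have hsplit := card_filter_add_card_filter_not (s := G.edgeFinset)
    (fun f => ∀ e ∈ M, ∀ v ∈ f, v ∉ e)
  set good := G.edgeFinset.filter fun f => ∀ e ∈ M, ∀ v ∈ f, v ∉ e
  have hbad : #(G.edgeFinset.filter fun f => ¬ ∀ e ∈ M, ∀ v ∈ f, v ∉ e)
      ≤ 2 * j * Fintype.card V := by
    calc _ ≤ #(M.biUnion fun e => e.toFinset.biUnion fun v => G.incidenceFinset v) :=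
          card_le_card fun f hf => by
            simp only [mem_filter, not_forall, not_not] at hf
            obtain ⟨hf, e, he, v, hvf, hve⟩ := hf
            exact mem_biUnion.2 ⟨e, he, mem_biUnion.2 ⟨v, Sym2.mem_toFinset.2 hve,
              (G.mem_incidenceFinset v _).2 ⟨mem_edgeFinset.1 hf, hvf⟩⟩⟩
      _ ≤ ∑ e ∈ M, ∑ v ∈ e.toFinset, #(G.incidenceFinset v) :=
          card_biUnion_le.trans (sum_le_sum fun e _ => card_biUnion_le)
      _ ≤ ∑ _e ∈ M, 2 * Fintype.card V := sum_le_sum fun e _ => by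
          calc _ ≤ #e.toFinset * Fintype.card V := by
                simpa [card_incidenceFinset_eq_degree] using
                  sum_le_card_nsmul _ _ _ fun v _ => (G.degree_lt_card_verts v).le
            _ ≤ 2 * Fintype.card V := by
                rw [Sym2.card_toFinset]
                split_ifs <;> omega
      _ = 2 * j * Fintype.card V := by rw [sum_const, smul_eq_mul, hcard]; ring
  have hgood : #G.edgeFinset - 2 * j * Fintype.card V ≤ #good := by omega
  have hnew : ∀ f ∈ good, f ∉ M := fun f hf hfM =>
    (mem_filter.1 hf).2 f hfM _ f.out_fst_mem f.out_fst_mem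
  refine hgood.trans (card_le_card_of_injOn (insert · M) (fun f hf => ?_)
    fun f hf f' _ h => (insert_inj (hnew f hf)).1 h)
  obtain ⟨hfE, hfM⟩ := mem_filter.1 hf
  refine (mem_bipartiteAbove _).2 ⟨mem_matchingFinset.2 ⟨?_, ?_, ?_⟩, subset_insert _ _⟩
  · rw [card_insert_of_notMem (hnew f hf), hcard]
  · simp only [mem_insert, forall_eq_or_imp]
    exact ⟨mem_edgeFinset.1 hfE, hedge⟩
  · simp only [mem_insert, forall_eq_or_imp]
    refine ⟨⟨fun h => absurd rfl h, fun e he _ v hv hve => hfM e he v hv hve⟩,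
      fun e he => ⟨fun _ v hve hv => hfM e he v hv hve, hdisj e he⟩⟩

theorem pow_le_card_matchingFinset_mul_factorial {B k : ℕ}
    (hE : (2 * k + B) * Fintype.card V ≤ #G.edgeFinset) {j : ℕ} (hj : j ≤ k) :
    (B * Fintype.card V) ^ j ≤ #(matchingFinset G j) * j ! := by
  induction j with
  | zero =>
    have : ∅ ∈ matchingFinset G 0 := mem_matchingFinset.2 ⟨rfl, by simp [IsEdgeMatching]⟩
    simpa using card_pos.2 ⟨∅, this⟩
  | succ j ih =>
    have hB : B * Fintype.card V ≤ #G.edgeFinset - 2 * j * Fintype.card V := by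
      have : 2 * j * Fintype.card V ≤ 2 * k * Fintype.card V := by gcongr; omega
      rw [add_mul] at hE
      omega
    calc (B * Fintype.card V) ^ (j + 1) = (B * Fintype.card V) ^ j * (B * Fintype.card V) :=
          pow_succ _ _
      _ ≤ #(matchingFinset G j) * j ! * (#G.edgeFinset - 2 * j * Fintype.card V) := by
          gcongr
          exact ih (by omega)
      _ = #(matchingFinset G j) * (#G.edgeFinset - 2 * j * Fintype.card V) * j ! := by ring
      _ ≤ #(matchingFinset G (j + 1)) * (j + 1) * j ! :=
          Nat.mul_le_mul_right _ (card_matchingFinset_mul_le j)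
      _ = #(matchingFinset G (j + 1)) * (j + 1)! := by rw [Nat.factorial_succ]; ring

end ManyEdges

section Saturation

open SimpleGraph

variable {V : Type*} {G : SimpleGraph V} {s : ℕ}

theorem IsKSat.maximal (hG : IsKSat G s) : Maximal (fun H : SimpleGraph V => H.CliqueFree s) G :=
  ⟨hG.1, fun H hH hGH u v huv => by_contra fun h =>
    hG.2 u v (H.ne_of_adj huv) h (hH.anti (sup_le hGH ((edge_le_iff H).2 (Or.inr huv))))⟩

theorem IsKSat.exists_isNClique_of_not_adj [DecidableEq V] (hG : IsKSat G s) {u v : V}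
    (huv : u ≠ v) (h : ¬ G.Adj u v) :
    ∃ Q : Finset V, G.IsNClique (s - 2) Q ∧ ∀ x ∈ Q, G.Adj u x ∧ G.Adj v x := by
  obtain ⟨n, rfl⟩ : ∃ n, s = n + 1 :=
    Nat.exists_eq_add_one.2 (Nat.pos_of_ne_zero fun h0 => not_cliqueFree_zero (h0 ▸ hG.1))
  obtain ⟨Q, huQ, hvQ, hu, hv⟩ := exists_of_maximal_cliqueFree_not_adj hG.maximal huv h
  refine ⟨Q, ⟨hu.1.subset (by simp), ?_⟩, fun x hx => ⟨?_, ?_⟩⟩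
  · have := hu.2
    rw [card_insert_of_notMem huQ] at this
    omega
  · exact hu.1 (mem_insert_self u Q) (mem_insert_of_mem hx) fun h => huQ (h ▸ hx)
  · exact hv.1 (mem_insert_self v Q) (mem_insert_of_mem hx) fun h => hvQ (h ▸ hx)

end Saturation

section Embedding

variable {V : Type*} {G : SimpleGraph V}

theorem exists_sGraph_embedding {Q Y : Finset V} {q : ℕ} (hQ : G.IsNClique q Q)
    (hQY : Disjoint Q Y) (hadj : ∀ y ∈ Y, ∀ x ∈ Q, G.Adj y x) :
    ∃ f : Fin (q + #Y) → V, Function.Injective f ∧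
      ∀ a b, (sGraph (q + #Y) q).Adj a b → G.Adj (f a) (f b) := by
  set eQ : Fin q → V := fun i => (Q.equivFinOfCardEq hQ.2).symm i
  set eY : Fin #Y → V := fun i => (Y.equivFinOfCardEq rfl).symm i
  have heQ : ∀ i, eQ i ∈ Q := fun i => coe_mem _
  have heY : ∀ i, eY i ∈ Y := fun i => coe_mem _
  have hinjQ : Function.Injective eQ := Subtype.val_injective.comp (Equiv.injective _)
  refine ⟨Fin.append eQ eY, Fin.append_injective_iff.2 ⟨hinjQ,
    Subtype.val_injective.comp (Equiv.injective _), fun i j h =>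
    disjoint_left.1 hQY (heQ i) (h ▸ heY j)⟩, fun a b ⟨hne, hab⟩ => ?_⟩
  induction a using Fin.addCases with
  | left i =>
    induction b using Fin.addCases with
    | left j =>
      rw [Fin.append_left, Fin.append_left]
      exact hQ.1 (heQ i) (heQ j) (hinjQ.ne fun h => hne (h ▸ rfl))
    | right j =>
      rw [Fin.append_left, Fin.append_right]
      exact (hadj _ (heY j) _ (heQ i)).symm
  | right i =>
    induction b using Fin.addCases with
    | left j =>
      rw [Fin.append_right, Fin.append_left]
      exact hadj _ (heY i) _ (heQ j)
    | right j => simp at hab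

end Embedding

theorem numMatchings_mul_factorial_le_of_eq_satM {n k s : ℕ} {G : SimpleGraph (Fin n)}
    (hG : numMatchings G k = satM n k s) (hs : 2 ≤ s) (hsn : s ≤ n) :
    numMatchings G k * k ! ≤ (s - 2).descFactorial k * n.descFactorial k := by
  have hsat : IsKSat (sGraph n (s - 2)) s := by
    simpa [Nat.sub_add_cancel hs] using sGraph_isKSat (q := s - 2) (by omega : s - 2 + 2 ≤ n)
  calc numMatchings G k * k ! ≤ numMatchings (sGraph n (s - 2)) k * k ! :=
        Nat.mul_le_mul_right _ (hG ▸ Nat.sInf_le ⟨_, hsat, rfl⟩)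
    _ ≤ _ := numMatchings_sGraph_mul_factorial_le n (s - 2) k

section Extremal

open SimpleGraph

variable {V : Type*} [Fintype V] {G : SimpleGraph V}

theorem card_edgeFinset_le_of_numMatchings_le [DecidableEq V] [DecidableRel G.Adj] {q k : ℕ}
    (hk : 1 ≤ k)
    (hG : numMatchings G k * k ! ≤ q.descFactorial k * (Fintype.card V).descFactorial k) :
    #G.edgeFinset ≤ (2 * k + (q + 1)) * Fintype.card V := by
  by_contra! h
  obtain ⟨e, -⟩ := card_pos.1 (by omega : 0 < #G.edgeFinset)
  have hV : 0 < Fintype.card V := Fintype.card_pos_iff.2 ⟨e.out.1⟩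
  have hlow : ((q + 1) * Fintype.card V) ^ k ≤ numMatchings G k * k ! := by
    rw [numMatchings_eq_card]
    exact pow_le_card_matchingFinset_mul_factorial h.le le_rfl
  have hup : numMatchings G k * k ! ≤ (q * Fintype.card V) ^ k := by
    rw [mul_pow]
    exact hG.trans (Nat.mul_le_mul (Nat.descFactorial_le_pow _ _) (Nat.descFactorial_le_pow _ _))
  exact (Nat.pow_lt_pow_left (by nlinarith) (by omega)).not_ge (hlow.trans hup)

theorem exists_degree_le_of_card_edgeFinset_le [DecidableRel G.Adj] [Nonempty V] {c : ℕ}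
    (hG : #G.edgeFinset ≤ c * Fintype.card V) : ∃ u, G.degree u ≤ 2 * c := by
  obtain ⟨u, -, hu⟩ := exists_le_of_sum_le univ_nonempty (f := fun v => G.degree v)
    (g := fun _ => 2 * c) (by simp [sum_degrees_eq_twice_card_edges]; nlinarith)
  exact ⟨u, hu⟩

theorem descFactorial_mul_card_le_of_two_classes [DecidableEq V] {Y Y₁ Y₂ : Finset V}
    {N : V → Finset V} {q t : ℕ} {x : V}
    (hG : numMatchings G (t + 1) * (t + 1)!
      ≤ q.descFactorial (t + 1) * (Fintype.card V).descFactorial (t + 1))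
    (hN : ∀ y ∈ Y, q ≤ #(N y)) (hNG : ∀ y ∈ Y, ∀ x ∈ N y, G.Adj y x ∧ x ∉ Y)
    (ht : 1 ≤ t) (htq : t ≤ q) (hY₁ : Y₁ ⊆ Y) (hY₂ : Y₂ ⊆ Y) (hY₁₂ : Disjoint Y₁ Y₂)
    (hx₁ : ∀ y ∈ Y₁, x ∈ N y) (hx₂ : ∀ y ∈ Y₂, x ∉ N y) :
    (#Y₁).descFactorial t * (q - 1).descFactorial (t - 1) * #Y₂
      ≤ q ^ (t + 1) * ((t + 1) * (Fintype.card V - #Y)) * Fintype.card V ^ t := by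
  have hV := Nat.descFactorial_succ_le_add (card_le_univ Y) t
  have := calc (#Y).descFactorial (t + 1) * q.descFactorial (t + 1)
        + (#Y₁).descFactorial t * (q - 1).descFactorial (t - 1) * #Y₂
      ≤ #(pairMatchings Y N (t + 1)) * (t + 1)! :=
        descFactorial_mul_descFactorial_add_le_card_pairMatchings hN ht htq hY₁ hY₂ hY₁₂ hx₁ hx₂
    _ ≤ numMatchings G (t + 1) * (t + 1)! :=
        Nat.mul_le_mul_right _ (card_pairMatchings_le_numMatchings hNG)
    _ ≤ q.descFactorial (t + 1) * ((#Y).descFactorial (t + 1)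
          + (t + 1) * (Fintype.card V - #Y) * Fintype.card V ^ t) :=
        hG.trans (Nat.mul_le_mul_left _ hV)
  calc _ ≤ q.descFactorial (t + 1) * ((t + 1) * (Fintype.card V - #Y) * Fintype.card V ^ t) := by
        rw [mul_add] at this
        linarith
    _ ≤ _ := by
        rw [← mul_assoc]
        gcongr
        exact Nat.descFactorial_le_pow _ _

end Extremal

section Main

open SimpleGraph

variable {V : Type*} [Fintype V] [DecidableEq V] {G : SimpleGraph V}

theorem IsKSat.exists_cliques_of_degree_le [DecidableRel G.Adj] {s D : ℕ} (hG : IsKSat G s)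
    {u : V} (hu : G.degree u ≤ D) :
    ∃ (Y : Finset V) (N : V → Finset V), Fintype.card V ≤ #Y + (D + 1) ∧
      #(Y.image N) ≤ D.choose (s - 2) ∧ (∀ y ∈ Y, G.IsNClique (s - 2) (N y)) ∧
      ∀ y ∈ Y, ∀ x ∈ N y, G.Adj y x ∧ x ∉ Y := by
  have : ∀ y ∈ univ \ insert u (G.neighborFinset u), ∃ Q : Finset V,
      G.IsNClique (s - 2) Q ∧ Q ⊆ G.neighborFinset u ∧ ∀ x ∈ Q, G.Adj y x := by
    intro y hy
    simp only [mem_sdiff, mem_univ, mem_insert, mem_neighborFinset, not_or, true_and] at hy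
    obtain ⟨Q, hQ, hQu⟩ := hG.exists_isNClique_of_not_adj (Ne.symm hy.1) hy.2
    exact ⟨Q, hQ, fun x hx => (mem_neighborFinset _ _ _).2 (hQu x hx).1,
      fun x hx => (hQu x hx).2⟩
  choose! N hN using this
  refine ⟨univ \ insert u (G.neighborFinset u), N, ?_, ?_, fun y hy => (hN y hy).1,
    fun y hy x hx => ⟨(hN y hy).2.2 x hx, fun hxY => ?_⟩⟩
  · rw [card_univ_sdiff, card_insert_of_notMem (G.notMem_neighborFinset_self u),
      card_neighborFinset_eq_degree]
    omega
  · refine (card_le_card (t := (G.neighborFinset u).powersetCard (s - 2))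
      (image_subset_iff.2 fun y hy => mem_powersetCard.2 ⟨(hN y hy).2.1, (hN y hy).1.2⟩)).trans ?_
    rw [card_powersetCard, card_neighborFinset_eq_degree]
    exact Nat.choose_le_choose _ hu
  · exact (mem_sdiff.1 hxY).2 (mem_insert_of_mem ((hN y hy).2.1 hx))

variable {Y : Finset V} {N : V → Finset V} {q t P D : ℕ}

theorem card_class_le_of_numMatchings_le {y₁ y₂ : V}
    (hG : numMatchings G (t + 1) * (t + 1)!
      ≤ q.descFactorial (t + 1) * (Fintype.card V).descFactorial (t + 1))
    (hN : ∀ y ∈ Y, G.IsNClique q (N y)) (hNG : ∀ y ∈ Y, ∀ x ∈ N y, G.Adj y x ∧ x ∉ Y)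
    (ht : 1 ≤ t) (htq : t ≤ q) (hY : Fintype.card V ≤ #Y + D)
    (hy₁ : y₁ ∈ Y) (hy₂ : y₂ ∈ Y) (hne : N y₂ ≠ N y₁)
    (hlarge : Fintype.card V ≤ 2 * (P * (#{y ∈ Y | N y = N y₁} + 1 - t))) :
    #{y ∈ Y | N y = N y₂} ≤ q ^ (t + 1) * ((t + 1) * D) * (2 * P) ^ t := by
  obtain ⟨x, hx⟩ : (N y₁ \ N y₂).Nonempty := sdiff_nonempty.2 fun h =>
    hne (eq_of_subset_of_card_le h (by rw [(hN _ hy₁).2, (hN _ hy₂).2])).symm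
  rw [mem_sdiff] at hx
  have h := descFactorial_mul_card_le_of_two_classes (Y₁ := {y ∈ Y | N y = N y₁})
    (Y₂ := {y ∈ Y | N y = N y₂}) hG (fun y hy => (hN y hy).2.ge) hNG ht htq
    (filter_subset _ _) (filter_subset _ _)
    (disjoint_filter.2 fun y _ h₁ h₂ => hne (h₂.symm.trans h₁))
    (fun y hy => (mem_filter.1 hy).2 ▸ hx.1) (fun y hy => (mem_filter.1 hy).2 ▸ hx.2)
  refine le_of_descFactorial_mul_le (Fintype.card_pos_iff.2 ⟨y₁⟩) hlarge
    (Nat.pos_of_ne_zero (mt Nat.descFactorial_eq_zero_iff_lt.1 (by omega))) (h.trans ?_)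
  gcongr
  omega

theorem exists_card_le_card_class_add
    (hG : numMatchings G (t + 1) * (t + 1)!
      ≤ q.descFactorial (t + 1) * (Fintype.card V).descFactorial (t + 1))
    (hN : ∀ y ∈ Y, G.IsNClique q (N y)) (hNG : ∀ y ∈ Y, ∀ x ∈ N y, G.Adj y x ∧ x ∉ Y)
    (ht : 1 ≤ t) (htq : t ≤ q) (hY : Fintype.card V ≤ #Y + D) (hP : #(Y.image N) ≤ P)
    (hV : 2 * (D + P * t) < Fintype.card V) :
    ∃ y₁ ∈ Y, Fintype.card V
      ≤ #{y ∈ Y | N y = N y₁} + D + P * (q ^ (t + 1) * ((t + 1) * D) * (2 * P) ^ t) := by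
  obtain ⟨Q₁, hQ₁, hY₁⟩ := exists_card_le_mul_card_fiber (f := N)
    (card_pos.1 (by omega : 0 < #Y))
  obtain ⟨y₁, hy₁, rfl⟩ := mem_image.1 hQ₁
  have hlarge : Fintype.card V ≤ 2 * (P * (#{y ∈ Y | N y = N y₁} + 1 - t)) := by
    have : #(Y.image N) * #{y ∈ Y | N y = N y₁}
        ≤ P * (#{y ∈ Y | N y = N y₁} + 1 - t) + P * t := by
      rw [← mul_add]
      exact Nat.mul_le_mul hP (by omega)
    omega
  have := card_le_card_fiber_add hQ₁ fun Q₂ hQ₂ hne => by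
    obtain ⟨y₂, hy₂, rfl⟩ := mem_image.1 hQ₂
    exact card_class_le_of_numMatchings_le hG hN hNG ht htq hY hy₁ hy₂ hne hlarge
  have := Nat.mul_le_mul_right (q ^ (t + 1) * ((t + 1) * D) * (2 * P) ^ t) hP
  exact ⟨y₁, hy₁, by omega⟩

end Main

theorem exists_sGraph_embedding_of_extremal {s k : ℕ} (hk : 2 ≤ k) (hks : k ≤ s - 2) :
    ∃ C : ℕ, ∀ n (G : SimpleGraph (Fin n)), IsKSat G s → numMatchings G k = satM n k s →
      ∃ m, n ≤ m + C ∧ ∃ f : Fin m → Fin n, Function.Injective f ∧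
        ∀ a b, (sGraph m (s - 2)).Adj a b → G.Adj (f a) (f b) := by
  classical
  obtain ⟨t, rfl⟩ : ∃ t, k = t + 1 := ⟨k - 1, by omega⟩
  set q := s - 2 with hq
  -- `D` bounds the minimum degree, `P` the number of cliques `N y`, and `C` every class but one.
  set D := 2 * (2 * (t + 1) + (q + 1))
  set P := D.choose q
  set C := q ^ (t + 1) * ((t + 1) * (D + 1)) * (2 * P) ^ t
  refine ⟨2 * (D + 1 + P * t) + s + (D + 1) + P * C, fun n G hG hext => ?_⟩
  by_cases hn : n ≤ 2 * (D + 1 + P * t) + s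
  · exact ⟨0, by omega, Fin.elim0, fun a => a.elim0, fun a => a.elim0⟩
  have hup := numMatchings_mul_factorial_le_of_eq_satM hext (by omega) (by omega)
  have : Nonempty (Fin n) := ⟨⟨0, by omega⟩⟩
  obtain ⟨u, hu⟩ := exists_degree_le_of_card_edgeFinset_le
    (card_edgeFinset_le_of_numMatchings_le (G := G) (q := q) (k := t + 1) (by omega)
      (by rwa [Fintype.card_fin]))
  obtain ⟨Y, N, hY, hP, hN, hNG⟩ := hG.exists_cliques_of_degree_le hu
  obtain ⟨y₁, hy₁, hY₁⟩ := exists_card_le_card_class_add (D := D + 1) (P := P)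
    (by rwa [Fintype.card_fin]) hN hNG (by omega) (by omega) hY hP
    (by rw [Fintype.card_fin]; omega)
  obtain ⟨f, hf, hfG⟩ := exists_sGraph_embedding (hN y₁ hy₁) (Y := {y ∈ Y | N y = N y₁})
    (disjoint_left.2 fun x hx hxY => (hNG y₁ hy₁ x hx).2 (mem_filter.1 hxY).1)
    fun y hy x hx => (hNG y (mem_filter.1 hy).1 x ((mem_filter.1 hy).2 ▸ hx)).1
  have hm : n ≤ #{y ∈ Y | N y = N y₁} + (D + 1) + P * C := by
    rw [Fintype.card_fin] at hY₁
    exact hY₁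
  exact ⟨q + #{y ∈ Y | N y = N y₁}, by omega, f, hf, hfG⟩

/-- For `3 ≤ k ≤ s - 2`, every extremal `K_s`-saturated graph on `n` vertices contains a
subgraph isomorphic to `S_{m,s-2}` for some `m ≥ (1 - ε)·n`. -/
theorem stmt_15 (s k : ℕ) (hk : 3 ≤ k) (hks : k ≤ s - 2) (ε : ℝ) (hε : 0 < ε) :
    ∃ n₀ : ℕ, ∀ n ≥ n₀, ∀ G : SimpleGraph (Fin n),
      IsKSat G s → numMatchings G k = satM n k s →
      ∃ m : ℕ, (1 - ε) * (n : ℝ) ≤ (m : ℝ) ∧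
        ∃ f : Fin m → Fin n, Function.Injective f ∧
          ∀ a b, (sGraph m (s - 2)).Adj a b → G.Adj (f a) (f b) := by
  obtain ⟨C, hC⟩ := exists_sGraph_embedding_of_extremal (by omega : 2 ≤ k) hks
  refine ⟨⌈(C : ℝ) / ε⌉₊, fun n hn G hG hext => ?_⟩
  obtain ⟨m, hm, f, hf, hfG⟩ := hC n G hG hext
  refine ⟨m, ?_, f, hf, hfG⟩
  have hCn : (C : ℝ) ≤ ε * n := by
    rw [← div_le_iff₀' hε]
    exact (Nat.le_ceil _).trans (by exact_mod_cast hn)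
  have hmC : (n : ℝ) ≤ m + C := by exact_mod_cast hm
  linarith
end

section
/- Let n, s be integers with n ≥ s ≥ 4, and let G be a graph on n vertices with m edges such that every vertex of G has degree either s−2 or n−1. Then the number of matchings of size 2 in G equals (1/2)·(m² + (7 − 2n − 2s)·m + n(n−1)(s−2)). -/
/-!
Among the `C(m, 2)` pairs of edges, those that are not matchings share exactly one vertex, so
they number `∑ᵥ C(dᵥ, 2)`; with `∑ᵥ dᵥ = 2m` this gives `2 N(M₂, G) = m² + m - ∑ᵥ dᵥ²`.
When every degree is `a = s - 2` or `b = n - 1`, each `dᵥ` satisfies `dᵥ² = (a + b) dᵥ - ab`,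
so `∑ᵥ dᵥ² = 2m(a + b) - n a b`, which is linear in `m`.
-/

open Finset

namespace SimpleGraph

variable {V : Type*} [Fintype V] [DecidableEq V] (G : SimpleGraph V) [DecidableRel G.Adj]

theorem numMatchings_eq_card_filter (k : ℕ) :
    numMatchings G k = #{M ∈ G.edgeFinset.powersetCard k |
      ∀ e ∈ M, ∀ f ∈ M, e ≠ f → ∀ v, v ∈ e → v ∉ f} := by
  rw [numMatchings, ← Set.ncard_coe_finset]
  congr 1
  ext M
  simp only [Set.mem_ofPred_eq, coe_filter, mem_powersetCard, subset_iff, mem_edgeFinset]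
  tauto

omit [Fintype V] [DecidableEq V] in
theorem not_pairwise_disjoint_iff_of_card_eq_two {M : Finset (Sym2 V)} (hM : #M = 2) :
    ¬ (∀ e ∈ M, ∀ f ∈ M, e ≠ f → ∀ v, v ∈ e → v ∉ f) ↔ ∃ v, ∀ e ∈ M, v ∈ e := by
  classical
  obtain ⟨e, f, hef, rfl⟩ := card_eq_two.mp hM
  simp only [mem_insert, mem_singleton, forall_eq_or_imp, forall_eq]
  grind

theorem filter_not_pairwise_disjoint_powersetCard_two :
    {M ∈ G.edgeFinset.powersetCard 2 | ¬ ∀ e ∈ M, ∀ f ∈ M, e ≠ f → ∀ v, v ∈ e → v ∉ f} =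
      univ.biUnion fun v => (G.incidenceFinset v).powersetCard 2 := by
  ext M
  simp only [mem_filter, mem_powersetCard, mem_biUnion, mem_univ, true_and, subset_iff,
    mem_edgeFinset, mem_incidenceFinset, incidenceSet]
  constructor
  · rintro ⟨⟨hE, hM⟩, hshare⟩
    obtain ⟨v, hv⟩ := (not_pairwise_disjoint_iff_of_card_eq_two hM).mp hshare
    exact ⟨v, fun e he => ⟨hE he, hv e he⟩, hM⟩
  · rintro ⟨v, hv, hM⟩
    exact ⟨⟨fun e he => (hv he).1, hM⟩,
      (not_pairwise_disjoint_iff_of_card_eq_two hM).mpr ⟨v, fun e he => (hv he).2⟩⟩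

theorem pairwiseDisjoint_powersetCard_two_incidenceFinset (t : Set V) :
    t.PairwiseDisjoint fun v => (G.incidenceFinset v).powersetCard 2 := by
  intro v _ w _ hvw
  rw [Function.onFun, Finset.disjoint_left]
  simp only [mem_powersetCard]
  rintro M ⟨hMv, hM⟩ ⟨hMw, -⟩
  obtain ⟨e, f, hef, rfl⟩ := card_eq_two.mp hM
  have joins (g) (hg : g ∈ ({e, f} : Finset _)) : g = s(v, w) :=
    (Sym2.mem_and_mem_iff hvw).mp
      ⟨(G.mem_incidenceFinset _ _).mp (hMv hg) |>.2, (G.mem_incidenceFinset _ _).mp (hMw hg) |>.2⟩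
  exact hef ((joins e (by simp)).trans (joins f (by simp)).symm)

theorem numMatchings_two_add_sum_degree_choose_two :
    numMatchings G 2 + ∑ v, (G.degree v).choose 2 = (#G.edgeFinset).choose 2 := by
  rw [numMatchings_eq_card_filter, ← card_powersetCard,
    ← card_filter_add_card_filter_not (s := G.edgeFinset.powersetCard 2)
      fun M => ∀ e ∈ M, ∀ f ∈ M, e ≠ f → ∀ v, v ∈ e → v ∉ f,
    filter_not_pairwise_disjoint_powersetCard_two,
    card_biUnion (G.pairwiseDisjoint_powersetCard_two_incidenceFinset _)]
  simp only [card_powersetCard, card_incidenceFinset_eq_degree]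

theorem two_mul_numMatchings_two :
    2 * (numMatchings G 2 : ℝ) =
      (#G.edgeFinset : ℝ) ^ 2 + #G.edgeFinset - ∑ v, (G.degree v : ℝ) ^ 2 := by
  have hcount := congrArg (Nat.cast : ℕ → ℝ) G.numMatchings_two_add_sum_degree_choose_two
  have hdegrees := congrArg (Nat.cast : ℕ → ℝ) G.sum_degrees_eq_twice_card_edges
  push_cast [Nat.cast_choose_two] at hcount hdegrees
  have hsplit : ∑ v, (G.degree v : ℝ) * (G.degree v - 1) / 2 =
      (∑ v, (G.degree v : ℝ) ^ 2 - ∑ v, (G.degree v : ℝ)) / 2 := by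
    rw [← sum_sub_distrib, sum_div]
    exact sum_congr rfl fun v _ => by ring
  linarith

omit [DecidableEq V] in
theorem sum_degree_sq_of_degree_eq_or_eq {a b : ℝ}
    (h : ∀ v, (G.degree v : ℝ) = a ∨ (G.degree v : ℝ) = b) :
    ∑ v, (G.degree v : ℝ) ^ 2 =
      (a + b) * (2 * #G.edgeFinset) - Fintype.card V * (a * b) := by
  have hdegrees := congrArg (Nat.cast : ℕ → ℝ) G.sum_degrees_eq_twice_card_edges
  push_cast at hdegrees
  have hroot (v) : (G.degree v : ℝ) ^ 2 = (a + b) * G.degree v - a * b := by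
    rcases h v with h | h <;> rw [h] <;> ring
  rw [sum_congr rfl fun v _ => hroot v, sum_sub_distrib, ← mul_sum, hdegrees, sum_const,
    card_univ, nsmul_eq_mul]

end SimpleGraph

theorem stmt_18_general (n s : ℕ) (hs : 4 ≤ s) (G : SimpleGraph (Fin n))
    [DecidableRel G.Adj]
    (hdeg : ∀ v, G.degree v = s - 2 ∨ G.degree v = n - 1) :
    (numMatchings G 2 : ℝ) = (1 / 2) * ((G.edgeFinset.card : ℝ) ^ 2 +
      (7 - 2 * (n : ℝ) - 2 * (s : ℝ)) * (G.edgeFinset.card : ℝ) +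
      (n : ℝ) * ((n : ℝ) - 1) * ((s : ℝ) - 2)) := by
  have hdegR (v : Fin n) : (G.degree v : ℝ) = s - 2 ∨ (G.degree v : ℝ) = n - 1 := by
    have hn_pos : 1 ≤ n := v.pos
    rcases hdeg v with h | h
    · exact .inl (by rw [h, Nat.cast_sub (by omega)]; norm_num)
    · exact .inr (by rw [h, Nat.cast_sub hn_pos]; norm_num)
  have hsq := G.sum_degree_sq_of_degree_eq_or_eq hdegR
  rw [Fintype.card_fin] at hsq
  linarith [G.two_mul_numMatchings_two]

/-- For `n ≥ s ≥ 4`, if every vertex of a graph `G` on `n` vertices with `m` edges has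
degree `s - 2` or `n - 1`, then `N(M_2, G) = (1/2)(m² + (7 - 2n - 2s)m + n(n-1)(s-2))`. -/
theorem stmt_18 (n s : ℕ) (hs : 4 ≤ s) (hn : s ≤ n) (G : SimpleGraph (Fin n))
    [DecidableRel G.Adj]
    (hdeg : ∀ v, G.degree v = s - 2 ∨ G.degree v = n - 1) :
    (numMatchings G 2 : ℝ) = (1 / 2) * ((G.edgeFinset.card : ℝ) ^ 2 +
      (7 - 2 * (n : ℝ) - 2 * (s : ℝ)) * (G.edgeFinset.card : ℝ) +
      (n : ℝ) * ((n : ℝ) - 1) * ((s : ℝ) - 2)) :=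
  stmt_18_general n s hs G hdeg
end
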